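/- arXiv:2508.02825 — 10 statements merged into one kernel-verified Lean document; each statement's English description precedes it below -/
import Mathlib

section
/- Let A be a symmetric n×n real matrix with ‖A‖ ≤ 1 and nonnegative entries. If A has at least t eigenvalues ≤ -λ (counted with multiplicity) for some λ ≥ 0 and positive integer t, then for any σ ∈ (0,1), A has at least σ²t eigenvalues ≥ (λ² - σ)/(1 - σ). -/
open Matrix Finset
open scoped Classical

/-!
Let `P` be the orthogonal projection onto the eigenvectors with eigenvalue `≤ -λ`, of rank `m`,
and `Z = D^{-1/2} (P ∘ P) D^{-1/2}` with `D = diag P`. Since `⟪A, P⟫ ≤ -λ m` and `A ≥ 0`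
entrywise, `λ m ≤ ∑ A_uv |P_uv|`, and Cauchy–Schwarz against
`∑ A_uv √(P_uu P_vv) = dᵀ A d ≤ tr P = m` gives `⟪A, Z⟫ ≥ λ² m`. As a normalized Hadamard square
of a projection, `0 ≤ Z ≤ I` with `tr Z = tr P = m`. So the weights `q_i = v_iᵀ Z v_i ∈ [0, 1]`
of the eigenvectors have total `m` and `∑ μ_i q_i = ⟪A, Z⟫ ≥ λ² m`; as all `μ_i ≤ 1`, a
Markov-type count puts weight at least `σ m` on the eigenvalues `μ_i ≥ (λ² - σ) / (1 - σ)`.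
-/

theorem mul_sum_le_card_filter_of_weighted_mean_ge {κ : Type*} [Fintype κ] {μ q : κ → ℝ}
    {ρ σ : ℝ} (hq0 : ∀ i, 0 ≤ q i) (hq1 : ∀ i, q i ≤ 1) (hμ : ∀ i, μ i ≤ 1) (hρ : ρ ≤ 1)
    (hσ : σ < 1) (hmean : ρ * ∑ i, q i ≤ ∑ i, μ i * q i) :
    σ * ∑ i, q i ≤ #{i | (ρ - σ) / (1 - σ) ≤ μ i} := by
  set τ := (ρ - σ) / (1 - σ)
  set R : Finset κ := {i | τ ≤ μ i}
  have hQ : ∑ i ∈ R, q i ≤ #R := by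
    simpa using sum_le_sum fun i (_ : i ∈ R) => hq1 i
  have hQ0 : 0 ≤ ∑ i ∈ R, q i := sum_nonneg fun i _ => hq0 i
  have hsplit := sum_add_sum_compl R q
  have hlt : ∀ i ∈ Rᶜ, μ i < τ := fun i hi => by simpa [R] using hi
  refine le_trans ?_ hQ
  rcases hρ.lt_or_eq with hρ | rfl
  · have hμq : ∑ i, μ i * q i ≤ ∑ i ∈ R, q i + τ * ∑ i ∈ Rᶜ, q i := by
      rw [← sum_add_sum_compl R, mul_sum]
      exact add_le_add (sum_le_sum fun i _ => mul_le_of_le_one_left (hq0 i) (hμ i))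
        (sum_le_sum fun i hi => mul_le_mul_of_nonneg_right (hlt i hi).le (hq0 i))
    have hτ : τ * (1 - σ) = ρ - σ := div_mul_cancel₀ _ (by linarith)
    have hkey : (1 - ρ) * (σ * ∑ i, q i - ∑ i ∈ R, q i) =
        (1 - σ) * (ρ * ∑ i, q i - (∑ i ∈ R, q i + τ * ∑ i ∈ Rᶜ, q i)) := by
      linear_combination (∑ i ∈ Rᶜ, q i) * hτ + (ρ - σ) * hsplit
    have : (1 - ρ) * (σ * ∑ i, q i - ∑ i ∈ R, q i) ≤ 0 := by
      rw [hkey]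
      exact mul_nonpos_of_nonneg_of_nonpos (by linarith) (by linarith)
    exact sub_nonpos.1 (nonpos_of_mul_nonpos_right this (by linarith))
  -- for `ρ = 1` the threshold is `1`, and `hmean` leaves no weight where `μ i < 1`
  · have hτ : τ = 1 := div_self (by linarith)
    have hQc : ∑ i ∈ Rᶜ, q i = 0 := by
      by_contra hne
      obtain ⟨j, hj, hqj⟩ := exists_ne_zero_of_sum_ne_zero hne
      have : ∑ i, μ i * q i < ∑ i, q i :=
        sum_lt_sum (fun i _ => mul_le_of_le_one_left (hq0 i) (hμ i)) ⟨j, mem_univ j,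
          mul_lt_of_lt_one_left ((hq0 j).lt_of_ne' hqj) (hτ ▸ hlt j hj)⟩
      linarith
    nlinarith

theorem sq_sum_mul_abs_le {ι : Type*} [Fintype ι] {A P : Matrix ι ι ℝ} {d : ι → ℝ}
    (hA : ∀ u v, 0 ≤ A u v) (hd : ∀ u, 0 ≤ d u) (hP : ∀ u v, d u * d v = 0 → P u v = 0) :
    (∑ u, ∑ v, A u v * |P u v|) ^ 2 ≤
      (∑ u, ∑ v, A u v * (P u v ^ 2 / (d u * d v))) * ∑ u, ∑ v, A u v * (d u * d v) := by
  simp only [← Fintype.sum_prod_type']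
  refine sum_sq_le_sum_mul_sum_of_sq_le_mul _
    (fun x _ => mul_nonneg (hA _ _) (div_nonneg (sq_nonneg _) (mul_nonneg (hd _) (hd _))))
    (fun x _ => mul_nonneg (hA _ _) (mul_nonneg (hd _) (hd _))) fun ⟨u, v⟩ _ => ?_
  by_cases h : d u * d v = 0
  · simp [hP u v h]
  · rw [mul_mul_mul_comm, div_mul_cancel₀ _ h, mul_pow, sq_abs, sq]

/-- `D^{-1/2} (P ∘ P) D^{-1/2}` for `D = diag P`; where `P u u = 0`, division by zero acts as the
pseudo-inverse. -/
noncomputable def normalizedHadamardSq {ι : Type*} (P : Matrix ι ι ℝ) : Matrix ι ι ℝ :=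
  of fun u v => P u v ^ 2 / (√(P u u) * √(P v v))

theorem normalizedHadamardSq_apply_self {ι : Type*} {P : Matrix ι ι ℝ} {u : ι} (hP : 0 ≤ P u u) :
    normalizedHadamardSq P u u = P u u := by
  rw [normalizedHadamardSq, of_apply, Real.mul_self_sqrt hP, sq, mul_self_div_self]

theorem normalizedHadamardSq_nonneg {ι : Type*} (P : Matrix ι ι ℝ) (u v : ι) :
    0 ≤ normalizedHadamardSq P u v :=
  div_nonneg (sq_nonneg _) (mul_nonneg (Real.sqrt_nonneg _) (Real.sqrt_nonneg _))

theorem trace_normalizedHadamardSq {ι : Type*} [Fintype ι] {P : Matrix ι ι ℝ}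
    (hP : ∀ u, 0 ≤ P u u) : trace (normalizedHadamardSq P) = trace P :=
  sum_congr rfl fun u _ => normalizedHadamardSq_apply_self (hP u)

theorem dotProduct_normalizedHadamardSq_mulVec {ι : Type*} [Fintype ι] (P : Matrix ι ι ℝ)
    (x : ι → ℝ) : x ⬝ᵥ normalizedHadamardSq P *ᵥ x =
      ∑ u, ∑ v, x u / √(P u u) * (x v / √(P v v)) * P u v ^ 2 := by
  simp only [dotProduct, mulVec, normalizedHadamardSq, of_apply, mul_sum]
  exact sum_congr rfl fun u _ => sum_congr rfl fun v _ => by ring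

section Orthogonal

variable {ι : Type*} [Fintype ι] [DecidableEq ι] {U : Matrix ι ι ℝ}

theorem vecMul_dotProduct_vecMul_of_mem_orthogonalGroup (hU : U ∈ orthogonalGroup ι ℝ)
    (x : ι → ℝ) : x ᵥ* U ⬝ᵥ x ᵥ* U = x ⬝ᵥ x := by
  rw [← dotProduct_mulVec, ← mulVec_transpose, mulVec_mulVec,
    (mem_orthogonalGroup_iff ι ℝ).1 hU, one_mulVec]

theorem sum_sq_vecMul_le_of_mem_orthogonalGroup (hU : U ∈ orthogonalGroup ι ℝ)
    (S : Finset ι) (x : ι → ℝ) : ∑ b ∈ S, (x ᵥ* U) b ^ 2 ≤ x ⬝ᵥ x := by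
  rw [← vecMul_dotProduct_vecMul_of_mem_orthogonalGroup hU, dotProduct]
  simp_rw [← sq]
  exact sum_le_univ_sum_of_nonneg fun _ => sq_nonneg _

theorem dotProduct_mulVec_le_of_eigenvalues_le_one (hU : U ∈ orthogonalGroup ι ℝ)
    {A : Matrix ι ι ℝ} {μ : ι → ℝ} (hA : A = U * diagonal μ * Uᵀ) (hμ : ∀ i, μ i ≤ 1)
    (x : ι → ℝ) : x ⬝ᵥ A *ᵥ x ≤ x ⬝ᵥ x := by
  rw [hA, ← mulVec_mulVec, ← mulVec_mulVec, dotProduct_mulVec, mulVec_transpose,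
    ← vecMul_dotProduct_vecMul_of_mem_orthogonalGroup hU x]
  refine sum_le_sum fun i _ => ?_
  rw [mulVec_diagonal, mul_left_comm]
  exact mul_le_of_le_one_left (mul_self_nonneg _) (hμ i)

theorem transpose_apply_dotProduct_self_of_mem_orthogonalGroup (hU : U ∈ orthogonalGroup ι ℝ)
    (i : ι) : Uᵀ i ⬝ᵥ Uᵀ i = 1 := by
  simpa [mul_apply, dotProduct] using congr_fun₂ ((mem_orthogonalGroup_iff' ι ℝ).1 hU) i i

theorem sum_diag_transpose_mul_mul (hU : U ∈ orthogonalGroup ι ℝ) (M : Matrix ι ι ℝ) :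
    ∑ i, (Uᵀ * M * U) i i = trace M := by
  change trace (Uᵀ * M * U) = _
  rw [trace_mul_cycle, (mem_orthogonalGroup_iff ι ℝ).1 hU, one_mul]

theorem sum_mul_diag_transpose_mul_mul {A : Matrix ι ι ℝ} {μ : ι → ℝ}
    (hA : A = U * diagonal μ * Uᵀ) (M : Matrix ι ι ℝ) :
    ∑ i, μ i * (Uᵀ * M * U) i i = trace (A * M) := by
  rw [hA, trace_mul_cycle, trace_mul_cycle, ← Matrix.mul_assoc]
  simp only [trace, diag_apply, mul_diagonal, mul_comm]

noncomputable def orthProj (U : Matrix ι ι ℝ) (S : Finset ι) : Matrix ι ι ℝ :=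
  U * diagonal (fun a => if a ∈ S then 1 else 0) * Uᵀ

theorem orthProj_apply (S : Finset ι) (u v : ι) :
    orthProj U S u v = ∑ a ∈ S, U u a * U v a := by
  simp [orthProj, mul_apply, diagonal, sum_ite_mem]

theorem orthProj_apply_comm (S : Finset ι) (u v : ι) : orthProj U S v u = orthProj U S u v := by
  simp only [orthProj_apply, mul_comm]

theorem orthProj_apply_self_nonneg (S : Finset ι) (u : ι) : 0 ≤ orthProj U S u u := by
  rw [orthProj_apply]
  exact sum_nonneg fun _ _ => mul_self_nonneg _

theorem orthProj_apply_sq_le (S : Finset ι) (u v : ι) :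
    orthProj U S u v ^ 2 ≤ orthProj U S u u * orthProj U S v v := by
  simp only [orthProj_apply, ← sq]
  exact sum_mul_sq_le_sq_mul_sq S _ _

theorem transpose_mul_orthProj_mul (hU : U ∈ orthogonalGroup ι ℝ) (S : Finset ι) :
    Uᵀ * orthProj U S * U = diagonal (fun a => if a ∈ S then 1 else 0) := by
  have hUU := (mem_orthogonalGroup_iff' ι ℝ).1 hU
  simp only [orthProj, Matrix.mul_assoc, hUU, mul_one, ← Matrix.mul_assoc Uᵀ, one_mul]

theorem trace_orthProj (hU : U ∈ orthogonalGroup ι ℝ) (S : Finset ι) :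
    trace (orthProj U S) = #S := by
  simp [← sum_diag_transpose_mul_mul hU, transpose_mul_orthProj_mul hU]

theorem trace_mul_orthProj (hU : U ∈ orthogonalGroup ι ℝ) {A : Matrix ι ι ℝ} {μ : ι → ℝ}
    (hA : A = U * diagonal μ * Uᵀ) (S : Finset ι) : trace (A * orthProj U S) = ∑ a ∈ S, μ a := by
  simp [← sum_mul_diag_transpose_mul_mul hA, transpose_mul_orthProj_mul hU]

theorem sum_sum_mul_orthProj_sq (S : Finset ι) (y : ι → ℝ) :
    ∑ u, ∑ v, y u * y v * orthProj U S u v ^ 2 =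
      ∑ a ∈ S, ∑ b ∈ S, (∑ u, y u * U u a * U u b) ^ 2 := by
  simp_rw [orthProj_apply, sq, sum_mul_sum, mul_sum, sum_comm (s := (univ : Finset ι)) (t := S)]
  exact sum_congr rfl fun a _ => sum_congr rfl fun b _ => sum_congr rfl fun u _ =>
    sum_congr rfl fun v _ => by ring

theorem dotProduct_normalizedHadamardSq_orthProj_mulVec_nonneg (S : Finset ι) (x : ι → ℝ) :
    0 ≤ x ⬝ᵥ normalizedHadamardSq (orthProj U S) *ᵥ x := by
  rw [dotProduct_normalizedHadamardSq_mulVec, sum_sum_mul_orthProj_sq]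
  exact sum_nonneg fun _ _ => sum_nonneg fun _ _ => sq_nonneg _

theorem dotProduct_normalizedHadamardSq_orthProj_mulVec_le (hU : U ∈ orthogonalGroup ι ℝ)
    (S : Finset ι) (x : ι → ℝ) :
    x ⬝ᵥ normalizedHadamardSq (orthProj U S) *ᵥ x ≤ x ⬝ᵥ x := by
  set P := orthProj U S
  set y : ι → ℝ := fun u => x u / √(P u u)
  calc x ⬝ᵥ normalizedHadamardSq P *ᵥ x
      = ∑ a ∈ S, ∑ b ∈ S, ((fun u => y u * U u a) ᵥ* U) b ^ 2 := by
        rw [dotProduct_normalizedHadamardSq_mulVec, sum_sum_mul_orthProj_sq]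
        rfl
    _ ≤ ∑ a ∈ S, ∑ u, (y u * U u a) ^ 2 :=
        sum_le_sum fun a _ => (sum_sq_vecMul_le_of_mem_orthogonalGroup hU S _).trans_eq
          (by simp only [dotProduct, sq])
    _ = ∑ u, x u ^ 2 * (P u u / P u u) := by
        rw [sum_comm]
        refine sum_congr rfl fun u _ => ?_
        have hPu : ∑ a ∈ S, (y u * U u a) ^ 2 = y u ^ 2 * P u u := by
          simp only [P, orthProj_apply, mul_sum]
          exact sum_congr rfl fun a _ => by ring
        rw [hPu, div_pow, Real.sq_sqrt (orthProj_apply_self_nonneg S u)]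
        ring
    _ ≤ x ⬝ᵥ x := sum_le_sum fun u _ => by
        rw [← sq]; exact mul_le_of_le_one_right (sq_nonneg _) (div_self_le_one _)

theorem sq_mul_card_le_trace_mul_normalizedHadamardSq_orthProj (hU : U ∈ orthogonalGroup ι ℝ)
    {A : Matrix ι ι ℝ} {μ : ι → ℝ} (hA : A = U * diagonal μ * Uᵀ) (hA0 : ∀ u v, 0 ≤ A u v)
    (hμ : ∀ i, μ i ≤ 1) {S : Finset ι} {lam : ℝ} (hlam : 0 ≤ lam) (hS : ∀ a ∈ S, μ a ≤ -lam) :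
    lam ^ 2 * #S ≤ trace (A * normalizedHadamardSq (orthProj U S)) := by
  set P := orthProj U S
  set d : ι → ℝ := fun u => √(P u u)
  have hPc : ∀ u v, P v u = P u v := orthProj_apply_comm S
  have hd : ∀ u v, d u * d v = 0 → P u v = 0 := by
    intro u v h
    have hsq : P u v ^ 2 ≤ P u u * P v v := orthProj_apply_sq_le S u v
    have hdiag : P u u * P v v = 0 := by
      have hdP : ∀ w, d w = 0 → P w w = 0 :=
        fun w => (Real.sqrt_eq_zero (orthProj_apply_self_nonneg S w)).1
      rcases mul_eq_zero.1 h with h | h <;> simp [hdP _ h]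
    exact pow_eq_zero_iff two_ne_zero |>.1 (le_antisymm (hdiag ▸ hsq) (sq_nonneg _))
  have hAP : lam * #S ≤ ∑ u, ∑ v, A u v * |P u v| :=
    calc lam * #S = ∑ a ∈ S, lam := by simp [mul_comm]
      _ ≤ -trace (A * P) := by
        rw [trace_mul_orthProj hU hA, ← sum_neg_distrib]
        exact sum_le_sum fun a ha => le_neg_of_le_neg (hS a ha)
      _ ≤ ∑ u, ∑ v, A u v * |P u v| := by
        simp only [trace, diag_apply, mul_apply, ← sum_neg_distrib, hPc]
        exact sum_le_sum fun u _ => sum_le_sum fun v _ => by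
          rw [← mul_neg]; exact mul_le_mul_of_nonneg_left (neg_le_abs _) (hA0 u v)
  have hAd : ∑ u, ∑ v, A u v * (d u * d v) ≤ #S :=
    calc ∑ u, ∑ v, A u v * (d u * d v) = d ⬝ᵥ A *ᵥ d := by
          simp only [dotProduct, mulVec, mul_sum]
          exact sum_congr rfl fun u _ => sum_congr rfl fun v _ => by ring
      _ ≤ d ⬝ᵥ d := dotProduct_mulVec_le_of_eigenvalues_le_one hU hA hμ d
      _ = trace P := sum_congr rfl fun u _ => Real.mul_self_sqrt (orthProj_apply_self_nonneg S u)
      _ = #S := trace_orthProj hU S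
  have hAZ :
      trace (A * normalizedHadamardSq P) = ∑ u, ∑ v, A u v * (P u v ^ 2 / (d u * d v)) := by
    simp only [trace, diag_apply, mul_apply, normalizedHadamardSq, of_apply, hPc]
    exact sum_congr rfl fun u _ => sum_congr rfl fun v _ => by rw [mul_comm (√(P v v))]
  have hAZ0 : 0 ≤ trace (A * normalizedHadamardSq P) := sum_nonneg fun u _ =>
    sum_nonneg fun v _ => mul_nonneg (hA0 u v) (normalizedHadamardSq_nonneg P v u)
  have hCS := sq_sum_mul_abs_le hA0 (fun u => Real.sqrt_nonneg (P u u)) hd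
  rw [← hAZ] at hCS
  rcases (Nat.cast_nonneg (α := ℝ) #S).eq_or_lt with hS0 | hS0
  · rw [← hS0, mul_zero]; exact hAZ0
  · refine le_of_mul_le_mul_right ?_ hS0
    calc lam ^ 2 * #S * #S = (lam * #S) ^ 2 := by ring
      _ ≤ (∑ u, ∑ v, A u v * |P u v|) ^ 2 := pow_le_pow_left₀ (by positivity) hAP 2
      _ ≤ trace (A * normalizedHadamardSq P) * ∑ u, ∑ v, A u v * (d u * d v) := hCS
      _ ≤ trace (A * normalizedHadamardSq P) * #S := mul_le_mul_of_nonneg_left hAd hAZ0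

theorem mul_card_filter_le_neg_le_card_filter_ge (hU : U ∈ orthogonalGroup ι ℝ)
    {A : Matrix ι ι ℝ} {μ : ι → ℝ} (hA : A = U * diagonal μ * Uᵀ) (hA0 : ∀ u v, 0 ≤ A u v)
    (hμ : ∀ i, μ i ≤ 1) {lam σ : ℝ} (hlam : 0 ≤ lam) (hlam1 : lam ≤ 1) (hσ : σ < 1) :
    σ * #{i | μ i ≤ -lam} ≤ #{i | (lam ^ 2 - σ) / (1 - σ) ≤ μ i} := by
  set S : Finset ι := {i | μ i ≤ -lam}
  set Z := normalizedHadamardSq (orthProj U S)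
  have hq0 : ∀ i, 0 ≤ (Uᵀ * Z * U) i i := fun i => by
    rw [mul_mul_apply]; exact dotProduct_normalizedHadamardSq_orthProj_mulVec_nonneg S _
  have hq1 : ∀ i, (Uᵀ * Z * U) i i ≤ 1 := fun i => by
    rw [mul_mul_apply, ← transpose_apply_dotProduct_self_of_mem_orthogonalGroup hU i]
    exact dotProduct_normalizedHadamardSq_orthProj_mulVec_le hU S _
  have hsum : ∑ i, (Uᵀ * Z * U) i i = #S := by
    rw [sum_diag_transpose_mul_mul hU, trace_normalizedHadamardSq (orthProj_apply_self_nonneg S),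
      trace_orthProj hU]
  have hmean : lam ^ 2 * ∑ i, (Uᵀ * Z * U) i i ≤ ∑ i, μ i * (Uᵀ * Z * U) i i := by
    rw [hsum, sum_mul_diag_transpose_mul_mul hA]
    exact sq_mul_card_le_trace_mul_normalizedHadamardSq_orthProj hU hA hA0 hμ hlam
      fun a ha => (mem_filter.1 ha).2
  simpa only [hsum] using mul_sum_le_card_filter_of_weighted_mean_ge hq0 hq1 hμ
    (pow_le_one₀ hlam hlam1) hσ hmean

end Orthogonal

theorem stmt0 {n : ℕ} (A : Matrix (Fin n) (Fin n) ℝ) (hA : A.IsHermitian)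
    (hpos : ∀ i j, 0 ≤ A i j)
    (hnorm : ∀ i, |hA.eigenvalues i| ≤ 1)
    (lam : ℝ) (hlam : 0 ≤ lam) (t : ℕ) (ht : 0 < t)
    (hbot : t ≤ (Finset.univ.filter fun i => hA.eigenvalues i ≤ -lam).card)
    (σ : ℝ) (hσ0 : 0 < σ) (hσ1 : σ < 1) :
    σ ^ 2 * t ≤
      ((Finset.univ.filter fun i => (lam ^ 2 - σ) / (1 - σ) ≤ hA.eigenvalues i).card : ℝ) := by
  obtain ⟨U, hU, hAU⟩ : ∃ U ∈ orthogonalGroup (Fin n) ℝ,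
      A = U * diagonal hA.eigenvalues * Uᵀ := by
    refine ⟨hA.eigenvectorUnitary, hA.eigenvectorUnitary.2, ?_⟩
    conv_lhs => rw [hA.spectral_theorem]
    simp [Unitary.conjStarAlgAut_apply, star_eq_conjTranspose]
  have hμ : ∀ i, hA.eigenvalues i ≤ 1 := fun i => (abs_le.1 (hnorm i)).2
  have hlam1 : lam ≤ 1 := by
    obtain ⟨a, ha⟩ := card_pos.1 (ht.trans_le hbot)
    linarith [(abs_le.1 (hnorm a)).1, (mem_filter.1 ha).2]
  have ht' : (t : ℝ) ≤ #{i | hA.eigenvalues i ≤ -lam} := by exact_mod_cast hbot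
  calc σ ^ 2 * t ≤ σ * t :=
        mul_le_mul_of_nonneg_right (pow_le_of_le_one hσ0.le hσ1.le two_ne_zero) t.cast_nonneg
    _ ≤ σ * #{i | hA.eigenvalues i ≤ -lam} := mul_le_mul_of_nonneg_left ht' hσ0.le
    _ ≤ _ := mul_card_filter_le_neg_le_card_filter_ge hU hAU hpos hμ hlam hlam1 hσ1
end

section
/- Let A be a symmetric n×n real matrix with ‖A‖ ≤ 1. Suppose there exists a positive semidefinite matrix M with ⟨A, M⟩ ≥ 1 - ε (Frobenius inner product), ‖M‖_F² ≤ 1/r, and Tr(M) = 1. Then for all C > 1, the number of eigenvalues of A that are at least 1 - Cε is at least (1 - 1/C)² r. -/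
open Matrix Finset
open scoped Classical

/-!
Write `M` in an orthonormal eigenbasis of `A`; its diagonal `p` is a probability vector with
`∑ λᵢ pᵢ = ⟨A, M⟩ ≥ 1 - ε` and `∑ pᵢ² ≤ ‖M‖_F² ≤ 1/r`. Since `λᵢ ≤ 1`, Markov's inequality for
the deficits `1 - λᵢ` puts mass at least `1 - 1/C` on `S = {i | λᵢ ≥ 1 - Cε}`, and Cauchy–Schwarz
gives `(1 - 1/C)² ≤ (∑_{i∈S} pᵢ)² ≤ |S| ∑ pᵢ² ≤ |S|/r`.
-/

section Weights

variable {ι : Type*} [Fintype ι]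

lemma sum_filter_lt_le_one_div_of_sum_mul_le {p d : ι → ℝ} {ε C : ℝ}
    (hp : ∀ i, 0 ≤ p i) (hd : ∀ i, 0 ≤ d i) (hmean : ∑ i, d i * p i ≤ ε) (hC : 0 < C) :
    ∑ i ∈ univ.filter (fun i => C * ε < d i), p i ≤ 1 / C := by
  set T := univ.filter fun i => C * ε < d i
  have hdp : ∀ i, 0 ≤ d i * p i := fun i => mul_nonneg (hd i) (hp i)
  have hT : ∑ i ∈ T, d i * p i ≤ ε := (sum_le_univ_sum_of_nonneg hdp).trans hmean
  have hε : 0 ≤ ε := (sum_nonneg fun i _ => hdp i).trans hmean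
  rcases hε.eq_or_lt with rfl | hε
  · have hzero : ∀ i ∈ T, p i = 0 := by
      have := (sum_eq_zero_iff_of_nonneg fun i _ => hdp i).mp
        (hT.antisymm (sum_nonneg fun i _ => hdp i))
      intro i hi
      have hdi : 0 < d i := by simpa [T] using hi
      simpa [hdi.ne'] using this i hi
    rw [sum_eq_zero hzero]
    positivity
  · have : C * ε * ∑ i ∈ T, p i ≤ ε := by
      rw [mul_sum]
      refine (sum_le_sum fun i hi => ?_).trans hT
      exact mul_le_mul_of_nonneg_right (mem_filter.mp hi).2.le (hp i)
    rw [le_div_iff₀ hC]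
    nlinarith

lemma sq_le_card_filter_mul_sum_sq {p μ : ι → ℝ} {ε C : ℝ} (hp : ∀ i, 0 ≤ p i)
    (hμ : ∀ i, μ i ≤ 1) (hsum : ∑ i, p i = 1) (hmean : 1 - ε ≤ ∑ i, μ i * p i) (hC : 1 < C) :
    (1 - 1 / C) ^ 2 ≤ (univ.filter fun i => 1 - C * ε ≤ μ i).card * ∑ i, p i ^ 2 := by
  set S := univ.filter fun i => 1 - C * ε ≤ μ i
  have htail : ∑ i ∈ univ.filter (fun i => C * ε < 1 - μ i), p i ≤ 1 / C := by
    refine sum_filter_lt_le_one_div_of_sum_mul_le hp (fun i => sub_nonneg.2 (hμ i)) ?_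
      (by linarith)
    simp only [sub_mul, one_mul, sum_sub_distrib, hsum]
    linarith
  have hS : 1 - 1 / C ≤ ∑ i ∈ S, p i := by
    have hsplit := sum_filter_add_sum_filter_not univ (fun i => 1 - C * ε ≤ μ i) p
    have hcompl : (univ.filter fun i => ¬1 - C * ε ≤ μ i)
        = univ.filter (fun i => C * ε < 1 - μ i) := by
      ext i
      simp only [mem_filter, mem_univ, true_and, not_le]
      constructor <;> intro <;> linarith
    rw [hcompl, hsum] at hsplit
    linarith
  have h1C : 0 ≤ 1 - 1 / C := by
    rw [sub_nonneg, div_le_one (by linarith)]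
    exact hC.le
  calc (1 - 1 / C) ^ 2 ≤ (∑ i ∈ S, p i) ^ 2 := pow_le_pow_left₀ h1C hS 2
    _ ≤ (S.card : ℝ) * ∑ i ∈ S, p i ^ 2 := sq_sum_le_card_mul_sum_sq
    _ ≤ S.card * ∑ i, p i ^ 2 := by
      gcongr
      exact subset_univ S

end Weights

section Eigenbasis

variable {ι : Type*} [Fintype ι]

lemma Matrix.trace_star_mul_mul_of_mem_unitary {R : Type*} [CommRing R] [StarRing R]
    [DecidableEq ι] {U : Matrix ι ι R} (hU : U ∈ unitary (Matrix ι ι R)) (X : Matrix ι ι R) :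
    (star U * X * U).trace = X.trace := by
  rw [trace_mul_cycle, Unitary.mul_star_self_of_mem hU, one_mul]

lemma Matrix.trace_transpose_mul_self_star_mul_mul_of_mem_unitary [DecidableEq ι]
    {U : Matrix ι ι ℝ} (hU : U ∈ unitary (Matrix ι ι ℝ)) (X : Matrix ι ι ℝ) :
    ((star U * X * U)ᵀ * (star U * X * U)).trace = (Xᵀ * X).trace := by
  have hUt : star U = Uᵀ := conjTranspose_eq_transpose_of_trivial U
  have : (star U * X * U)ᵀ * (star U * X * U) = star U * (Xᵀ * X) * U := by
    simp only [transpose_mul, hUt, transpose_transpose, Matrix.mul_assoc]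
    rw [← Matrix.mul_assoc U, ← hUt, Unitary.mul_star_self_of_mem hU, Matrix.one_mul]
  rw [this, trace_star_mul_mul_of_mem_unitary hU]

lemma Matrix.sum_diag_sq_le_trace_transpose_mul_self (N : Matrix ι ι ℝ) :
    ∑ i, N i i ^ 2 ≤ (Nᵀ * N).trace := by
  simp only [trace, diag_apply, mul_apply, transpose_apply]
  refine sum_le_sum fun i _ => ?_
  rw [sq]
  exact single_le_sum (f := fun j => N j i * N j i) (fun j _ => mul_self_nonneg _) (mem_univ i)

lemma Matrix.IsHermitian.trace_mul_eq_sum_eigenvalues_mul [DecidableEq ι] {A : Matrix ι ι ℝ}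
    (hA : A.IsHermitian) (M : Matrix ι ι ℝ) :
    (A * M).trace = ∑ i, hA.eigenvalues i *
      (star (hA.eigenvectorUnitary : Matrix ι ι ℝ) * M * hA.eigenvectorUnitary) i i := by
  set U : Matrix ι ι ℝ := ↑hA.eigenvectorUnitary
  have hspec : A = U * diagonal hA.eigenvalues * star U := by
    simpa using hA.spectral_theorem
  calc (A * M).trace = (U * (diagonal hA.eigenvalues * (star U * M))).trace := by
        conv_lhs => rw [hspec]
        simp only [Matrix.mul_assoc]
    _ = (diagonal hA.eigenvalues * (star U * M * U)).trace := by
        rw [trace_mul_comm, Matrix.mul_assoc]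
    _ = _ := by simp only [trace, diag_apply, diagonal_mul]

end Eigenbasis

theorem stmt2 {n : ℕ} (A M : Matrix (Fin n) (Fin n) ℝ) (hA : A.IsHermitian)
    (hnorm : ∀ i, |hA.eigenvalues i| ≤ 1)
    (hM : M.PosSemidef) (ε r : ℝ) (hr : 0 < r)
    (hip : 1 - ε ≤ Matrix.trace (Aᵀ * M))
    (hF : Matrix.trace (Mᵀ * M) ≤ 1 / r)
    (htr : Matrix.trace M = 1)
    (C : ℝ) (hC : 1 < C) :
    (1 - 1 / C) ^ 2 * r ≤
      ((Finset.univ.filter fun i => 1 - C * ε ≤ hA.eigenvalues i).card : ℝ) := by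
  set U := hA.eigenvectorUnitary
  set N : Matrix (Fin n) (Fin n) ℝ := star (U : Matrix (Fin n) (Fin n) ℝ) * M * U
  have hN : N.PosSemidef := by
    simpa only [N, star_eq_conjTranspose] using hM.conjTranspose_mul_mul_same U.1
  have hmean : 1 - ε ≤ ∑ i, hA.eigenvalues i * N i i := by
    rwa [(conjTranspose_eq_transpose_of_trivial A).symm.trans hA,
      hA.trace_mul_eq_sum_eigenvalues_mul] at hip
  have hfrob : ∑ i, N i i ^ 2 ≤ 1 / r := calc
    ∑ i, N i i ^ 2 ≤ (Nᵀ * N).trace := sum_diag_sq_le_trace_transpose_mul_self N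
    _ = (Mᵀ * M).trace := trace_transpose_mul_self_star_mul_mul_of_mem_unitary U.2 M
    _ ≤ 1 / r := hF
  have hcard : (1 - 1 / C) ^ 2 ≤
      (univ.filter fun i => 1 - C * ε ≤ hA.eigenvalues i).card * (1 / r) :=
    (sq_le_card_filter_mul_sum_sq (p := N.diag) (fun _ => hN.diag_nonneg)
      (fun i => (abs_le.mp (hnorm i)).2) ((trace_star_mul_mul_of_mem_unitary U.2 M).trans htr)
      hmean hC).trans (mul_le_mul_of_nonneg_left hfrob (Nat.cast_nonneg _))
  calc (1 - 1 / C) ^ 2 * r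
      ≤ (univ.filter fun i => 1 - C * ε ≤ hA.eigenvalues i).card * (1 / r) * r := by gcongr
    _ = _ := by field_simp
end

section
/- Let A be a nonnegative symmetric n×n matrix with ‖A‖ ≤ 1, and suppose A has orthonormal eigenvectors u_1,…,u_t with eigenvalues each at most -λ for some λ ≥ 0. Then there exists a matrix V ∈ ℝ^{t²×n} such that ⟨A, VᵀV⟩ ≥ λ², ‖VᵀV‖_F² ≤ 1/t, and Tr(VᵀV) = 1. -/
/-!
Let `U` be the matrix with rows `u i`, `P = UᵀU` the projection onto their span and
`d k = √(P k k)` the norm of the `k`-th column of `U`. The tensor embedding sends the `k`-th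
coordinate to `(U i k * U j k)_{i,j} / (√t * d k)`, so that `VᵀV` has entries
`P k l ^ 2 / (t * d k * d l)`. Its trace is `tr P / t = 1`; since `|P k l| ≤ d k * d l`, its
Frobenius norm is at most `‖P‖_F² / t² = tr P / t² = 1 / t`. Finally, by Cauchy–Schwarz,
`(∑ A k l * P k l)² ≤ ⟨A, VᵀV⟩ * t * (dᵀ A d)`, where `∑ A k l * P k l = ∑ μ i ≤ -λt`
and `dᵀ A d ≤ ‖d‖² = t` because the eigenvalues of `A` are at most `1`. Hence
`⟨A, VᵀV⟩ ≥ λ²`.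
-/

open Matrix Finset
open scoped Classical
open scoped ComplexOrder

namespace Matrix

variable {m n : Type*} [Fintype m]

theorem trace_transpose_mul_eq_sum [Fintype n] {R : Type*} [CommSemiring R] (A B : Matrix m n R) :
    trace (Aᵀ * B) = ∑ i, ∑ j, A i j * B i j := by
  rw [trace_mul_comm, ← sum_hadamard_eq]
  simp only [hadamard_apply, mul_comm]

theorem IsHermitian.posSemidef_one_sub [Fintype n] [DecidableEq n] {𝕜 : Type*} [RCLike 𝕜]
    {A : Matrix n n 𝕜} (hA : A.IsHermitian) (h : ∀ i, hA.eigenvalues i ≤ 1) :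
    (1 - A).PosSemidef := by
  have hdiag : (1 - diagonal (RCLike.ofReal ∘ hA.eigenvalues) : Matrix n n 𝕜).PosSemidef := by
    rw [← diagonal_one, diagonal_sub]
    refine posSemidef_diagonal_iff.mpr fun i => ?_
    rw [Function.comp_apply, ← RCLike.ofReal_one, ← RCLike.ofReal_sub, RCLike.ofReal_nonneg]
    exact sub_nonneg.mpr (h i)
  rw [hA.spectral_theorem, ← map_one (Unitary.conjStarAlgAut 𝕜 _ hA.eigenvectorUnitary),
    ← map_sub]
  simpa [Unitary.isUnit_coe.posSemidef_star_right_conjugate_iff] using hdiag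

theorem IsHermitian.dotProduct_mulVec_le [Fintype n] [DecidableEq n] {A : Matrix n n ℝ}
    (hA : A.IsHermitian) (h : ∀ i, hA.eigenvalues i ≤ 1) (x : n → ℝ) :
    x ⬝ᵥ A *ᵥ x ≤ x ⬝ᵥ x := by
  have := (hA.posSemidef_one_sub h).dotProduct_mulVec_nonneg x
  rwa [star_trivial, sub_mulVec, one_mulVec, dotProduct_sub, sub_nonneg] at this

theorem transpose_mul_self_apply_self_nonneg (U : Matrix m n ℝ) (k : n) :
    0 ≤ (Uᵀ * U) k k := by
  simpa only [mul_apply, transpose_apply] using sum_nonneg fun i _ => mul_self_nonneg (U i k)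

theorem sq_transpose_mul_self_apply_le (U : Matrix m n ℝ) (k l : n) :
    (Uᵀ * U) k l ^ 2 ≤ (Uᵀ * U) k k * (Uᵀ * U) l l := by
  simpa only [mul_apply, transpose_apply, sq] using
    sum_mul_sq_le_sq_mul_sq univ (fun i => U i k) (fun i => U i l)

theorem mul_transpose_eq_transpose_mul_diagonal [Fintype n] [DecidableEq m] {R : Type*}
    [CommSemiring R] {A : Matrix n n R} {U : Matrix m n R} {μ : m → R}
    (h : ∀ i, A *ᵥ U i = μ i • U i) :
    A * Uᵀ = Uᵀ * diagonal μ := by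
  ext k i
  rw [mul_diagonal, transpose_apply, mul_apply]
  simpa [mulVec, dotProduct, mul_comm] using congrFun (h i) k

end Matrix

section TensorEmbedding

variable {ι κ : Type*} [Fintype κ] (U : Matrix κ ι ℝ)

noncomputable def colNorm (k : ι) : ℝ := √((Uᵀ * U) k k)

/-- The paper's `f(k) = ‖g k‖ • (g k / ‖g k‖)^{⊗2}` for `g k = (U i k)_i / √t`, where
`t = card κ`. A zero column `k` is sent to `0`, as the division by `colNorm U k = 0` does. -/
noncomputable def tensorEmbedding : Matrix (κ × κ) ι ℝ :=
  of fun p k => U p.1 k * U p.2 k / (√(Fintype.card κ) * colNorm U k)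

theorem colNorm_nonneg (k : ι) : 0 ≤ colNorm U k := Real.sqrt_nonneg _

theorem colNorm_sq (k : ι) : colNorm U k ^ 2 = (Uᵀ * U) k k :=
  Real.sq_sqrt (transpose_mul_self_apply_self_nonneg U k)

theorem sq_transpose_mul_self_apply_le_colNorm (k l : ι) :
    (Uᵀ * U) k l ^ 2 ≤ (colNorm U k * colNorm U l) ^ 2 := by
  rw [mul_pow, colNorm_sq, colNorm_sq]
  exact sq_transpose_mul_self_apply_le U k l

theorem transpose_mul_self_apply_eq_zero {k l : ι} (h : colNorm U k * colNorm U l = 0) :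
    (Uᵀ * U) k l = 0 := by
  simpa [h] using sq_transpose_mul_self_apply_le_colNorm U k l

theorem tensorEmbedding_gram_apply (k l : ι) :
    ((tensorEmbedding U)ᵀ * tensorEmbedding U) k l
      = (Uᵀ * U) k l ^ 2 / (Fintype.card κ * (colNorm U k * colNorm U l)) := by
  have hcard : √(Fintype.card κ : ℝ) * √(Fintype.card κ) = Fintype.card κ :=
    Real.mul_self_sqrt (Nat.cast_nonneg _)
  simp only [mul_apply, transpose_apply, tensorEmbedding, of_apply, Fintype.sum_prod_type, sq,
    sum_mul_sum, sum_div]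
  refine sum_congr rfl fun i _ => sum_congr rfl fun j _ => ?_
  rw [div_mul_div_comm]
  congr 1
  · ring
  · linear_combination colNorm U k * colNorm U l * hcard

theorem tensorEmbedding_gram_apply_nonneg (k l : ι) :
    0 ≤ ((tensorEmbedding U)ᵀ * tensorEmbedding U) k l := by
  rw [tensorEmbedding_gram_apply]
  have := colNorm_nonneg U k
  have := colNorm_nonneg U l
  positivity

theorem sq_sum_mul_transpose_mul_self_apply_le [Fintype ι] [Nonempty κ] {A : Matrix ι ι ℝ}
    (hA_nonneg : ∀ k l, 0 ≤ A k l) :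
    (∑ k, ∑ l, A k l * (Uᵀ * U) k l) ^ 2
      ≤ trace (Aᵀ * ((tensorEmbedding U)ᵀ * tensorEmbedding U))
        * (Fintype.card κ * (colNorm U ⬝ᵥ A *ᵥ colNorm U)) := by
  have ht : (0 : ℝ) < Fintype.card κ := Nat.cast_pos.mpr Fintype.card_pos
  have hquad : Fintype.card κ * (colNorm U ⬝ᵥ A *ᵥ colNorm U)
      = ∑ k, ∑ l, A k l * (Fintype.card κ * (colNorm U k * colNorm U l)) := by
    simp only [dotProduct, mulVec, mul_sum]
    exact sum_congr rfl fun k _ => sum_congr rfl fun l _ => by ring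
  have hterm (k l : ι) : (A k l * (Uᵀ * U) k l) ^ 2
      ≤ A k l * ((tensorEmbedding U)ᵀ * tensorEmbedding U) k l
        * (A k l * (Fintype.card κ * (colNorm U k * colNorm U l))) := by
    rcases eq_or_ne (colNorm U k * colNorm U l) 0 with h | h
    · rw [transpose_mul_self_apply_eq_zero U h, h]
      simp
    · have hc : (Fintype.card κ : ℝ) * (colNorm U k * colNorm U l) ≠ 0 := mul_ne_zero ht.ne' h
      rw [tensorEmbedding_gram_apply, mul_mul_mul_comm, div_mul_cancel₀ _ hc]
      exact le_of_eq (by ring)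
  have hcs := sum_sq_le_sum_mul_sum_of_sq_le_mul (univ : Finset (ι × ι))
    (r := fun p => A p.1 p.2 * (Uᵀ * U) p.1 p.2)
    (f := fun p => A p.1 p.2 * ((tensorEmbedding U)ᵀ * tensorEmbedding U) p.1 p.2)
    (g := fun p => A p.1 p.2 * (Fintype.card κ * (colNorm U p.1 * colNorm U p.2)))
    (fun p _ => mul_nonneg (hA_nonneg _ _) (tensorEmbedding_gram_apply_nonneg U _ _))
    (fun p _ => mul_nonneg (hA_nonneg _ _) (mul_nonneg ht.le
      (mul_nonneg (colNorm_nonneg U _) (colNorm_nonneg U _))))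
    (fun p _ => hterm p.1 p.2)
  simpa only [Fintype.sum_prod_type, trace_transpose_mul_eq_sum, hquad] using hcs

end TensorEmbedding

section Orthonormal

variable {ι κ : Type*} [Fintype ι] [Fintype κ] [DecidableEq κ] {U : Matrix κ ι ℝ}

theorem trace_transpose_mul_self_of_mul_transpose_eq_one (hU : U * Uᵀ = 1) :
    trace (Uᵀ * U) = Fintype.card κ := by
  rw [trace_mul_comm, hU, trace_one]

theorem dotProduct_colNorm_self (hU : U * Uᵀ = 1) :
    colNorm U ⬝ᵥ colNorm U = Fintype.card κ := by
  simp only [dotProduct, ← sq, colNorm_sq]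
  exact trace_transpose_mul_self_of_mul_transpose_eq_one hU

theorem sum_sq_transpose_mul_self_apply (hU : U * Uᵀ = 1) :
    ∑ k, ∑ l, (Uᵀ * U) k l ^ 2 = Fintype.card κ := by
  calc ∑ k, ∑ l, (Uᵀ * U) k l ^ 2 = trace ((Uᵀ * U)ᵀ * (Uᵀ * U)) := by
        simp only [trace_transpose_mul_eq_sum, sq]
    _ = trace (Uᵀ * (U * Uᵀ) * U) := by
        rw [transpose_mul, transpose_transpose, Matrix.mul_assoc, Matrix.mul_assoc,
          Matrix.mul_assoc]
    _ = Fintype.card κ := by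
        rw [hU, Matrix.mul_one, trace_transpose_mul_self_of_mul_transpose_eq_one hU]

theorem sum_mul_transpose_mul_self_apply [DecidableEq ι] {A : Matrix ι ι ℝ} {μ : κ → ℝ}
    (hU : U * Uᵀ = 1) (heig : ∀ i, A *ᵥ U i = μ i • U i) :
    ∑ k, ∑ l, A k l * (Uᵀ * U) k l = ∑ i, μ i := by
  calc ∑ k, ∑ l, A k l * (Uᵀ * U) k l = trace (A * Uᵀ * U) := by
        rw [← trace_transpose_mul_eq_sum, ← trace_transpose_mul, transpose_mul,
          transpose_transpose, transpose_transpose, Matrix.mul_assoc]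
    _ = trace (U * Uᵀ * diagonal μ) := by
        rw [trace_mul_cycle, Matrix.mul_assoc, mul_transpose_eq_transpose_mul_diagonal heig,
          Matrix.mul_assoc]
    _ = ∑ i, μ i := by rw [hU, Matrix.one_mul, trace_diagonal]

theorem trace_tensorEmbedding_gram [Nonempty κ] (hU : U * Uᵀ = 1) :
    trace ((tensorEmbedding U)ᵀ * tensorEmbedding U) = 1 := by
  have hcard : (0 : ℝ) < Fintype.card κ := Nat.cast_pos.mpr Fintype.card_pos
  have hdiag (k : ι) : ((tensorEmbedding U)ᵀ * tensorEmbedding U) k k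
      = (Uᵀ * U) k k / Fintype.card κ := by
    rw [tensorEmbedding_gram_apply, ← sq, colNorm_sq]
    rcases eq_or_ne ((Uᵀ * U) k k) 0 with h | h
    · simp [h]
    · field_simp
  calc trace ((tensorEmbedding U)ᵀ * tensorEmbedding U)
      = ∑ k, (Uᵀ * U) k k / Fintype.card κ := sum_congr rfl fun k _ => hdiag k
    _ = trace (Uᵀ * U) / Fintype.card κ := (sum_div ..).symm
    _ = 1 := by rw [trace_transpose_mul_self_of_mul_transpose_eq_one hU, div_self hcard.ne']

theorem trace_transpose_tensorEmbedding_gram_mul_self_le (hU : U * Uᵀ = 1) :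
    trace (((tensorEmbedding U)ᵀ * tensorEmbedding U)ᵀ
        * ((tensorEmbedding U)ᵀ * tensorEmbedding U))
      ≤ 1 / Fintype.card κ := by
  set t : ℝ := (Fintype.card κ : ℝ)
  have hentry (k l : ι) : ((tensorEmbedding U)ᵀ * tensorEmbedding U) k l ^ 2
      ≤ (Uᵀ * U) k l ^ 2 / t ^ 2 := by
    have hratio : (Uᵀ * U) k l ^ 2 / (colNorm U k * colNorm U l) ^ 2 ≤ 1 :=
      div_le_one_of_le₀ (sq_transpose_mul_self_apply_le_colNorm U k l) (sq_nonneg _)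
    calc ((tensorEmbedding U)ᵀ * tensorEmbedding U) k l ^ 2
        = (Uᵀ * U) k l ^ 2 / (colNorm U k * colNorm U l) ^ 2 * ((Uᵀ * U) k l ^ 2 / t ^ 2) := by
          rw [tensorEmbedding_gram_apply]; ring
      _ ≤ (Uᵀ * U) k l ^ 2 / t ^ 2 := mul_le_of_le_one_left (by positivity) hratio
  calc _ ≤ ∑ k, ∑ l, (Uᵀ * U) k l ^ 2 / t ^ 2 := by
        simp only [trace_transpose_mul_eq_sum, ← sq]
        exact sum_le_sum fun k _ => sum_le_sum fun l _ => hentry k l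
    _ = 1 / t := by
        simp only [← sum_div]
        rw [sum_sq_transpose_mul_self_apply hU, sq, div_self_mul_self', one_div]

theorem sq_le_trace_transpose_mul_tensorEmbedding_gram [DecidableEq ι] [Nonempty κ]
    {A : Matrix ι ι ℝ} (hA : A.IsHermitian) (hA_nonneg : ∀ k l, 0 ≤ A k l)
    (hA_le : ∀ i, hA.eigenvalues i ≤ 1) (hU : U * Uᵀ = 1) {μ : κ → ℝ}
    (heig : ∀ i, A *ᵥ U i = μ i • U i) {lam : ℝ} (hlam : 0 ≤ lam)
    (hμ : ∀ i, μ i ≤ -lam) :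
    lam ^ 2 ≤ trace (Aᵀ * ((tensorEmbedding U)ᵀ * tensorEmbedding U)) := by
  set t : ℝ := (Fintype.card κ : ℝ)
  have ht : 0 < t := Nat.cast_pos.mpr Fintype.card_pos
  have hS : 0 ≤ trace (Aᵀ * ((tensorEmbedding U)ᵀ * tensorEmbedding U)) := by
    rw [trace_transpose_mul_eq_sum]
    exact sum_nonneg fun k _ => sum_nonneg fun l _ =>
      mul_nonneg (hA_nonneg k l) (tensorEmbedding_gram_apply_nonneg U k l)
  have hsum : lam * t ≤ -∑ k, ∑ l, A k l * (Uᵀ * U) k l := by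
    have := sum_le_sum fun i (_ : i ∈ univ) => hμ i
    rw [sum_const, card_univ, nsmul_eq_mul] at this
    rw [sum_mul_transpose_mul_self_apply hU heig]
    linarith
  have hquad : colNorm U ⬝ᵥ A *ᵥ colNorm U ≤ t :=
    (hA.dotProduct_mulVec_le hA_le _).trans_eq (dotProduct_colNorm_self hU)
  have key :
      lam ^ 2 * t ^ 2 ≤ trace (Aᵀ * ((tensorEmbedding U)ᵀ * tensorEmbedding U)) * t ^ 2 :=
    calc lam ^ 2 * t ^ 2 = (lam * t) ^ 2 := by ring
      _ ≤ (-∑ k, ∑ l, A k l * (Uᵀ * U) k l) ^ 2 := pow_le_pow_left₀ (by positivity) hsum 2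
      _ = (∑ k, ∑ l, A k l * (Uᵀ * U) k l) ^ 2 := neg_sq _
      _ ≤ trace (Aᵀ * ((tensorEmbedding U)ᵀ * tensorEmbedding U))
          * (t * (colNorm U ⬝ᵥ A *ᵥ colNorm U)) :=
        sq_sum_mul_transpose_mul_self_apply_le U hA_nonneg
      _ ≤ trace (Aᵀ * ((tensorEmbedding U)ᵀ * tensorEmbedding U)) * t ^ 2 := by
        rw [sq]; gcongr
  exact le_of_mul_le_mul_right key (by positivity)

end Orthonormal

theorem stmt3 {n t : ℕ} (ht : 0 < t) (A : Matrix (Fin n) (Fin n) ℝ) (hA : A.IsHermitian)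
    (hpos : ∀ i j, 0 ≤ A i j) (hnorm : ∀ i, |hA.eigenvalues i| ≤ 1)
    (lam : ℝ) (hlam : 0 ≤ lam)
    (u : Fin t → Fin n → ℝ) (μ : Fin t → ℝ)
    (hortho : ∀ i j, u i ⬝ᵥ u j = if i = j then 1 else 0)
    (heig : ∀ i, A.mulVec (u i) = μ i • u i)
    (hμ : ∀ i, μ i ≤ -lam) :
    ∃ V : Matrix (Fin (t ^ 2)) (Fin n) ℝ,
      lam ^ 2 ≤ Matrix.trace (Aᵀ * (Vᵀ * V)) ∧
      Matrix.trace ((Vᵀ * V)ᵀ * (Vᵀ * V)) ≤ 1 / t ∧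
      Matrix.trace (Vᵀ * V) = 1 := by
  have : Nonempty (Fin t) := ⟨⟨0, ht⟩⟩
  have hU : of u * (of u)ᵀ = 1 := by
    ext i j
    simpa [mul_apply, one_apply, dotProduct] using hortho i j
  set V := tensorEmbedding (of u)
  let e : Fin (t ^ 2) ≃ Fin t × Fin t := (finCongr (sq t)).trans finProdFinEquiv.symm
  have hgram : (V.submatrix e id)ᵀ * V.submatrix e id = Vᵀ * V := by
    rw [transpose_submatrix, submatrix_mul_equiv, submatrix_id_id]
  refine ⟨V.submatrix e id, ?_, ?_, ?_⟩ <;> rw [hgram]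
  · exact sq_le_trace_transpose_mul_tensorEmbedding_gram hA hpos
      (fun i => (abs_le.mp (hnorm i)).2) hU heig hlam hμ
  · simpa using trace_transpose_tensorEmbedding_gram_mul_self_le hU
  · exact trace_tensorEmbedding_gram hU
end

section
/- Let X be a symmetric n×n real matrix with eigenvectors v_1,…,v_k having eigenvalues λ_1,…,λ_k all of absolute value at least λ > 0. Let Y be a symmetric n×n matrix and let P be the orthogonal projection onto the span of eigenvectors of Y with eigenvalues of absolute value less than λ - η for some η > 0. Then for any orthonormal basis u_1,…,u_k of span(v_1,…,v_k), ∑_{i=1}^k ‖P u_i‖² ≤ (1/η²) ∑_{i=1}^k ‖(X - Y) u_i‖². -/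
/-!
For an eigenvector `w j` of `Y` with `|ν j| < λ - η`, the coordinates `w j ⬝ᵥ (X - Y) u i` are
those of `X - ν j`, which acts on `V = span u = span v` with all eigenvalues of absolute value at
least `η`. Projecting `w j` onto `V` and expanding in an eigenbasis of `X` gives
`η² ∑ i (u i ⬝ᵥ w j)² ≤ ∑ i (w j ⬝ᵥ (X - Y) u i)²`.
Summing over such `j`, the left side becomes `η² ∑ i ‖P u i‖²` and Bessel's inequality bounds the
right side by `∑ i ‖(X - Y) u i‖²`.
-/

open Matrix Finset

section Orthonormal

variable {m ι : Type*} [Fintype m]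

theorem dotProduct_sum_smul_of_orthonormal [DecidableEq ι] {u : ι → m → ℝ}
    (hu : ∀ i i', u i ⬝ᵥ u i' = if i = i' then 1 else 0) {s : Finset ι} {l : ι} (hl : l ∈ s)
    (c : ι → ℝ) : u l ⬝ᵥ ∑ i ∈ s, c i • u i = c l := by
  simp [dotProduct_sum, dotProduct_smul, hu, hl]

theorem sum_smul_dotProduct_sum_smul_of_orthonormal [DecidableEq ι] {u : ι → m → ℝ}
    (hu : ∀ i i', u i ⬝ᵥ u i' = if i = i' then 1 else 0) (s : Finset ι) (c : ι → ℝ) :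
    (∑ i ∈ s, c i • u i) ⬝ᵥ ∑ i ∈ s, c i • u i = ∑ i ∈ s, c i ^ 2 := by
  rw [sum_dotProduct]
  refine sum_congr rfl fun i hi => ?_
  rw [smul_dotProduct, dotProduct_sum_smul_of_orthonormal hu hi, smul_eq_mul, sq]

theorem sum_sq_dotProduct_le_of_orthonormal [DecidableEq ι] {u : ι → m → ℝ}
    (hu : ∀ i i', u i ⬝ᵥ u i' = if i = i' then 1 else 0) (s : Finset ι) (z : m → ℝ) :
    ∑ i ∈ s, (u i ⬝ᵥ z) ^ 2 ≤ z ⬝ᵥ z := by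
  set p := ∑ i ∈ s, (u i ⬝ᵥ z) • u i
  have hpp : p ⬝ᵥ p = ∑ i ∈ s, (u i ⬝ᵥ z) ^ 2 :=
    sum_smul_dotProduct_sum_smul_of_orthonormal hu s _
  have hzp : z ⬝ᵥ p = ∑ i ∈ s, (u i ⬝ᵥ z) ^ 2 := by
    rw [dotProduct_sum]
    refine sum_congr rfl fun i _ => ?_
    rw [dotProduct_smul, dotProduct_comm, smul_eq_mul, sq]
  have hnonneg : 0 ≤ (z - p) ⬝ᵥ (z - p) := by simpa using dotProduct_self_star_nonneg (z - p)
  simp only [sub_dotProduct, dotProduct_sub, dotProduct_comm p z] at hnonneg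
  linarith

theorem sum_dotProduct_smul_eq_self_of_mem_span [Fintype ι] [DecidableEq ι] {u : ι → m → ℝ}
    (hu : ∀ i i', u i ⬝ᵥ u i' = if i = i' then 1 else 0) {x : m → ℝ}
    (hx : x ∈ Submodule.span ℝ (Set.range u)) : ∑ i, (u i ⬝ᵥ x) • u i = x := by
  obtain ⟨c, rfl⟩ := (Submodule.mem_span_range_iff_exists_fun ℝ).1 hx
  simp_rw [dotProduct_sum_smul_of_orthonormal hu (mem_univ _)]

theorem dotProduct_eq_sum_mul_of_sum_smul_eq [Fintype ι] {u : ι → m → ℝ} (y : m → ℝ)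
    {z : m → ℝ} (hz : ∑ i, (u i ⬝ᵥ z) • u i = z) :
    y ⬝ᵥ z = ∑ i, (u i ⬝ᵥ y) * (u i ⬝ᵥ z) := by
  conv_lhs => rw [← hz]
  rw [dotProduct_sum]
  refine sum_congr rfl fun i _ => ?_
  rw [dotProduct_smul, smul_eq_mul, dotProduct_comm y, mul_comm]

end Orthonormal

theorem OrthonormalBasis.sum_ofLp_dotProduct_smul {m : Type*} [Fintype m]
    (b : OrthonormalBasis m ℝ (EuclideanSpace ℝ m)) (x : m → ℝ) :
    ∑ i, ((b i).ofLp ⬝ᵥ x) • (b i).ofLp = x := by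
  simpa [EuclideanSpace.inner_eq_star_dotProduct, dotProduct_comm] using
    congrArg WithLp.ofLp (b.sum_repr' (WithLp.toLp 2 x))

section Eigen

variable {m k : Type*} [Fintype m] [Fintype k]

theorem Matrix.IsHermitian.dotProduct_mulVec_comm {M : Matrix m m ℝ} (hM : M.IsHermitian)
    (a b : m → ℝ) : a ⬝ᵥ M *ᵥ b = M *ᵥ a ⬝ᵥ b := by
  rw [dotProduct_mulVec, ← mulVec_transpose, ← conjTranspose_eq_transpose_of_trivial, hM.eq]

theorem Matrix.IsHermitian.dotProduct_eq_zero_of_eigenvalue_ne {M : Matrix m m ℝ}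
    (hM : M.IsHermitian) {a b : m → ℝ} {α β : ℝ} (ha : M *ᵥ a = α • a) (hb : M *ᵥ b = β • b)
    (hne : α ≠ β) : a ⬝ᵥ b = 0 := by
  have h := hM.dotProduct_mulVec_comm a b
  rw [ha, hb, dotProduct_smul, smul_dotProduct, smul_eq_mul, smul_eq_mul] at h
  exact (mul_eq_zero.mp (by linarith : (β - α) * (a ⬝ᵥ b) = 0)).resolve_left
    (sub_ne_zero.mpr hne.symm)

theorem mulVec_mem_span_of_eigenvectors {X : Matrix m m ℝ} {v : k → m → ℝ} {μ : k → ℝ}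
    (hev : ∀ i, X *ᵥ v i = μ i • v i) {x : m → ℝ} (hx : x ∈ Submodule.span ℝ (Set.range v)) :
    X *ᵥ x ∈ Submodule.span ℝ (Set.range v) := by
  obtain ⟨a, rfl⟩ := (Submodule.mem_span_range_iff_exists_fun ℝ).1 hx
  rw [mulVec_sum]
  refine Submodule.sum_mem _ fun i _ => ?_
  rw [mulVec_smul, hev]
  exact Submodule.smul_mem _ _ (Submodule.smul_mem _ _ (Submodule.subset_span ⟨i, rfl⟩))

/-- Expand `x` in an eigenbasis of `X`: eigenvectors with eigenvalue of absolute value below `c`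
are orthogonal to every `v i`, hence to `x`. -/
theorem sq_mul_dotProduct_self_le_of_mem_span_eigenvectors [DecidableEq m]
    {X : Matrix m m ℝ} (hX : X.IsHermitian) {v : k → m → ℝ} {μ : k → ℝ}
    (hev : ∀ i, X *ᵥ v i = μ i • v i) {c : ℝ} (hc : 0 ≤ c) (hμ : ∀ i, c ≤ |μ i|)
    {x : m → ℝ} (hx : x ∈ Submodule.span ℝ (Set.range v)) :
    c ^ 2 * (x ⬝ᵥ x) ≤ X *ᵥ x ⬝ᵥ X *ᵥ x := by
  set e : m → m → ℝ := fun j => (hX.eigenvectorBasis j).ofLp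
  have hcomplete : ∀ y, ∑ j, (e j ⬝ᵥ y) • e j = y := hX.eigenvectorBasis.sum_ofLp_dotProduct_smul
  have he : ∀ j, X *ᵥ e j = hX.eigenvalues j • e j := hX.mulVec_eigenvectorBasis
  have hXe : ∀ j y, e j ⬝ᵥ X *ᵥ y = hX.eigenvalues j * (e j ⬝ᵥ y) := fun j y => by
    rw [hX.dotProduct_mulVec_comm, he, smul_dotProduct, smul_eq_mul]
  have horth : ∀ j, |hX.eigenvalues j| < c → e j ⬝ᵥ x = 0 := by
    intro j hj
    obtain ⟨a, rfl⟩ := (Submodule.mem_span_range_iff_exists_fun ℝ).1 hx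
    rw [dotProduct_sum]
    refine sum_eq_zero fun i _ => ?_
    rw [dotProduct_smul, hX.dotProduct_eq_zero_of_eigenvalue_ne (he j) (hev i)
      (fun h => (hμ i).not_gt (h ▸ hj)), smul_zero]
  rw [dotProduct_eq_sum_mul_of_sum_smul_eq x (hcomplete x),
    dotProduct_eq_sum_mul_of_sum_smul_eq _ (hcomplete _), mul_sum]
  refine sum_le_sum fun j _ => ?_
  rw [hXe]
  rcases lt_or_ge |hX.eigenvalues j| c with hj | hj
  · simp [horth j hj]
  · have hsq : c ^ 2 ≤ hX.eigenvalues j ^ 2 := by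
      simpa only [sq_abs] using pow_le_pow_left₀ hc hj 2
    linear_combination mul_le_mul_of_nonneg_right hsq (mul_self_nonneg (e j ⬝ᵥ x))

theorem sq_mul_sum_sq_dotProduct_le [DecidableEq m] {ι : Type*} [Fintype ι] [DecidableEq ι]
    {X : Matrix m m ℝ} (hX : X.IsHermitian) {v : k → m → ℝ} {μ : k → ℝ}
    (hev : ∀ i, X *ᵥ v i = μ i • v i) {c : ℝ} (hc : 0 ≤ c) (hμ : ∀ i, c ≤ |μ i|)
    {u : ι → m → ℝ} (hu : ∀ i i', u i ⬝ᵥ u i' = if i = i' then 1 else 0)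
    (hspan : Submodule.span ℝ (Set.range u) = Submodule.span ℝ (Set.range v)) (y : m → ℝ) :
    c ^ 2 * ∑ i, (u i ⬝ᵥ y) ^ 2 ≤ ∑ i, (y ⬝ᵥ X *ᵥ u i) ^ 2 := by
  set x := ∑ i, (u i ⬝ᵥ y) • u i
  have hxV : x ∈ Submodule.span ℝ (Set.range u) :=
    Submodule.sum_mem _ fun i _ => Submodule.smul_mem _ _ (Submodule.subset_span ⟨i, rfl⟩)
  have hux : ∀ i, u i ⬝ᵥ x = u i ⬝ᵥ y := fun i =>
    dotProduct_sum_smul_of_orthonormal hu (mem_univ i) _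
  have hXV : ∀ z ∈ Submodule.span ℝ (Set.range u), X *ᵥ z ∈ Submodule.span ℝ (Set.range u) := by
    rw [hspan]
    exact fun z hz => mulVec_mem_span_of_eigenvectors hev hz
  have hexpand : ∀ z ∈ Submodule.span ℝ (Set.range u), ∑ i, (u i ⬝ᵥ z) • u i = z :=
    fun _ hz => sum_dotProduct_smul_eq_self_of_mem_span hu hz
  have hyx : ∀ i, y ⬝ᵥ X *ᵥ u i = u i ⬝ᵥ X *ᵥ x := fun i => by
    have hXu := hexpand _ (hXV _ (Submodule.subset_span ⟨i, rfl⟩))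
    rw [dotProduct_eq_sum_mul_of_sum_smul_eq y hXu]
    simp_rw [← hux]
    rw [← dotProduct_eq_sum_mul_of_sum_smul_eq x hXu, hX.dotProduct_mulVec_comm, dotProduct_comm]
  calc c ^ 2 * ∑ i, (u i ⬝ᵥ y) ^ 2 = c ^ 2 * (x ⬝ᵥ x) := by
        rw [dotProduct_eq_sum_mul_of_sum_smul_eq x (hexpand x hxV)]
        simp_rw [hux, sq]
    _ ≤ X *ᵥ x ⬝ᵥ X *ᵥ x :=
        sq_mul_dotProduct_self_le_of_mem_span_eigenvectors hX hev hc hμ (hspan ▸ hxV)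
    _ = ∑ i, (y ⬝ᵥ X *ᵥ u i) ^ 2 := by
        rw [dotProduct_eq_sum_mul_of_sum_smul_eq _ (hexpand _ (hXV x hxV))]
        simp_rw [hyx, sq]

end Eigen

theorem sum_vecMulVec_self_mulVec {m ι : Type*} [Fintype m] (s : Finset ι) (w : ι → m → ℝ)
    (x : m → ℝ) : (∑ j ∈ s, vecMulVec (w j) (w j)) *ᵥ x = ∑ j ∈ s, (w j ⬝ᵥ x) • w j := by
  simp [sum_mulVec, vecMulVec_mulVec]

theorem stmt4_general {n k : ℕ} (X Y : Matrix (Fin n) (Fin n) ℝ)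
    (hX : X.IsHermitian) (hY : Y.IsHermitian)
    (v : Fin k → Fin n → ℝ) (μ : Fin k → ℝ) (lam η : ℝ) (hη : 0 < η)
    (hev : ∀ i, X.mulVec (v i) = μ i • v i) (hμ : ∀ i, lam ≤ |μ i|)
    (w : Fin n → Fin n → ℝ) (ν : Fin n → ℝ)
    (hw : ∀ j, Y.mulVec (w j) = ν j • w j)
    (hwortho : ∀ j j', w j ⬝ᵥ w j' = if j = j' then 1 else 0)
    (P : Matrix (Fin n) (Fin n) ℝ)
    (hP : P = ∑ j ∈ Finset.univ.filter (fun j => |ν j| < lam - η),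
      Matrix.vecMulVec (w j) (w j))
    (u : Fin k → Fin n → ℝ)
    (huortho : ∀ i i', u i ⬝ᵥ u i' = if i = i' then 1 else 0)
    (hspan : Submodule.span ℝ (Set.range u) = Submodule.span ℝ (Set.range v)) :
    ∑ i, (P.mulVec (u i)) ⬝ᵥ (P.mulVec (u i)) ≤
      (1 / η ^ 2) * ∑ i, ((X - Y).mulVec (u i)) ⬝ᵥ ((X - Y).mulVec (u i)) := by
  set S := univ.filter fun j => |ν j| < lam - η
  have hrow : ∀ j ∈ S, η ^ 2 * ∑ i, (u i ⬝ᵥ w j) ^ 2 ≤ ∑ i, (w j ⬝ᵥ (X - Y) *ᵥ u i) ^ 2 := by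
    intro j hj
    have hνj : |ν j| < lam - η := (mem_filter.mp hj).2
    have hshift : ∀ i, w j ⬝ᵥ (X - Y) *ᵥ u i = w j ⬝ᵥ (X - ν j • 1) *ᵥ u i := fun i => by
      rw [sub_mulVec, sub_mulVec, dotProduct_sub, dotProduct_sub, hY.dotProduct_mulVec_comm, hw,
        smul_mulVec, one_mulVec, smul_dotProduct, dotProduct_smul]
    simp_rw [hshift]
    refine sq_mul_sum_sq_dotProduct_le (hX.sub (isHermitian_one.smul (IsSelfAdjoint.all _)))
      (μ := fun i => μ i - ν j) (fun i => ?_) hη.le (fun i => ?_) huortho hspan (w j)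
    · rw [sub_mulVec, hev, smul_mulVec, one_mulVec, sub_smul]
    · linarith [hμ i, abs_sub_abs_le_abs_sub (μ i) (ν j)]
  calc ∑ i, P *ᵥ u i ⬝ᵥ P *ᵥ u i = 1 / η ^ 2 * (η ^ 2 * ∑ j ∈ S, ∑ i, (u i ⬝ᵥ w j) ^ 2) := by
        simp_rw [hP, sum_vecMulVec_self_mulVec, sum_smul_dotProduct_sum_smul_of_orthonormal hwortho,
          dotProduct_comm (u _)]
        rw [sum_comm]
        field_simp
    _ ≤ 1 / η ^ 2 * ∑ j ∈ S, ∑ i, (w j ⬝ᵥ (X - Y) *ᵥ u i) ^ 2 := by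
        gcongr
        rw [mul_sum]
        exact sum_le_sum hrow
    _ ≤ 1 / η ^ 2 * ∑ i, (X - Y) *ᵥ u i ⬝ᵥ (X - Y) *ᵥ u i := by
        rw [sum_comm]
        gcongr with i
        exact sum_sq_dotProduct_le_of_orthonormal hwortho S _

theorem stmt4 {n k : ℕ} (X Y : Matrix (Fin n) (Fin n) ℝ)
    (hX : X.IsHermitian) (hY : Y.IsHermitian)
    (v : Fin k → Fin n → ℝ) (μ : Fin k → ℝ) (lam η : ℝ) (hlam : 0 < lam) (hη : 0 < η)
    (hev : ∀ i, X.mulVec (v i) = μ i • v i) (hμ : ∀ i, lam ≤ |μ i|)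
    (w : Fin n → Fin n → ℝ) (ν : Fin n → ℝ)
    (hw : ∀ j, Y.mulVec (w j) = ν j • w j)
    (hwortho : ∀ j j', w j ⬝ᵥ w j' = if j = j' then 1 else 0)
    (P : Matrix (Fin n) (Fin n) ℝ)
    (hP : P = ∑ j ∈ Finset.univ.filter (fun j => |ν j| < lam - η),
      Matrix.vecMulVec (w j) (w j))
    (u : Fin k → Fin n → ℝ)
    (huortho : ∀ i i', u i ⬝ᵥ u i' = if i = i' then 1 else 0)
    (hspan : Submodule.span ℝ (Set.range u) = Submodule.span ℝ (Set.range v)) :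
    ∑ i, (P.mulVec (u i)) ⬝ᵥ (P.mulVec (u i)) ≤
      (1 / η ^ 2) * ∑ i, ((X - Y).mulVec (u i)) ⬝ᵥ ((X - Y).mulVec (u i)) :=
  stmt4_general X Y hX hY v μ lam η hη hev hμ w ν hw hwortho P hP u huortho hspan
end

section
/- Let G be an n-vertex d-regular graph with adjacency matrix A satisfying λ₂(A/d) ≤ c for some 0 < c < 1. Then for any vertex subset S, the number of edges of G with both endpoints in S is at most (d|S|/2)(|S|/n + c). -/
open Matrix Finset
open scoped Classical

/-!
Split the indicator vector `g` of `S` as its mean `|S|/n` times the all-ones vector, which `A`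
maps to `d` times itself, plus a vector `f` with coordinate sum zero. By symmetry of `A` the cross
terms of `g ⬝ A g` only see the all-ones part, so `g ⬝ A g = d |S|²/n + f ⬝ A f`, and the spectral
bound `f ⬝ A f ≤ c d |f|² = c d (|S| - |S|²/n) ≤ c d |S|` gives the claim.
-/

theorem Matrix.sum_sum_eq_indicator_dotProduct_mulVec {V R : Type*} [Fintype V] [CommSemiring R]
    (M : Matrix V V R) (S : Finset V) :
    ∑ x ∈ S, ∑ y ∈ S, M x y = (S : Set V).indicator 1 ⬝ᵥ M *ᵥ (S : Set V).indicator 1 := by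
  simp [dotProduct, mulVec, Set.indicator_apply, Finset.sum_ite_mem]

theorem Finset.sum_indicator_one {V R : Type*} [Fintype V] [AddCommMonoidWithOne R]
    (S : Finset V) :
    ∑ x, (S : Set V).indicator (1 : V → R) x = #S := by
  simp [Set.indicator_apply]

theorem Finset.indicator_one_dotProduct_self {V R : Type*} [Fintype V] [NonAssocSemiring R]
    (S : Finset V) :
    (S : Set V).indicator (1 : V → R) ⬝ᵥ (S : Set V).indicator 1 = #S := by
  simp [dotProduct, Set.indicator_apply]

theorem Matrix.IsSymm.dotProduct_mulVec_le_of_spectral_gap {V K : Type*} [Fintype V] [Field K]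
    [LinearOrder K] [IsStrictOrderedRing K] {M : Matrix V V K}
    (hM : M.IsSymm) {d μ : K} (hrow : M *ᵥ 1 = d • 1)
    (hgap : ∀ f : V → K, ∑ x, f x = 0 → f ⬝ᵥ M *ᵥ f ≤ μ * (f ⬝ᵥ f)) (g : V → K) :
    g ⬝ᵥ M *ᵥ g ≤ d * (∑ x, g x) ^ 2 / Fintype.card V +
      μ * (g ⬝ᵥ g - (∑ x, g x) ^ 2 / Fintype.card V) := by
  set N : K := (Fintype.card V : K)
  set σ := ∑ x, g x
  set a := σ / N
  have haN : a * N = σ := by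
    -- for empty `V` the junk value `a = σ / 0 = 0` still works, as then `σ = 0`
    rcases eq_or_ne N 0 with hN | hN
    · have : IsEmpty V := Fintype.card_eq_zero_iff.mp (by simpa [N] using hN)
      simp [σ, hN]
    · exact div_mul_cancel₀ σ hN
  have hcol : 1 ⬝ᵥ M *ᵥ g = d * σ := by
    rw [dotProduct_mulVec, ← mulVec_transpose, hM.eq, hrow, smul_dotProduct, one_dotProduct,
      smul_eq_mul]
  have hsum : ∑ x, (g - a • 1) x = 0 := by
    simp [Finset.sum_sub_distrib, σ, ← haN, N, mul_comm]
  have hf := hgap _ hsum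
  simp only [mulVec_sub, mulVec_smul, hrow, sub_dotProduct, dotProduct_sub, smul_dotProduct,
    dotProduct_smul, hcol, dotProduct_one, one_dotProduct, smul_eq_mul, hsum, mul_zero,
    sub_zero] at hf
  change _ ≤ μ * (g ⬝ᵥ g - a * σ) at hf
  have hsq : σ ^ 2 / N = a * σ := by simp only [a]; ring
  rw [mul_div_assoc, hsq]
  linarith

theorem SimpleGraph.IsRegularOfDegree.adjMatrix_mulVec_one {V R : Type*} [Fintype V]
    [NonAssocSemiring R] {G : SimpleGraph V} [DecidableRel G.Adj] {d : ℕ}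
    (hreg : G.IsRegularOfDegree d) : G.adjMatrix R *ᵥ 1 = (d : R) • 1 := by
  ext v
  simpa using adjMatrix_mulVec_const_apply_of_regular (a := (1 : R)) hreg

theorem stmt6_general {n d : ℕ} (G : SimpleGraph (Fin n)) [DecidableRel G.Adj]
    (hreg : G.IsRegularOfDegree d) (hd : 0 < d) (c : ℝ) (hc0 : 0 < c)
    (hexp : ∀ f : Fin n → ℝ, (∑ x, f x) = 0 →
      f ⬝ᵥ (((d : ℝ)⁻¹ • G.adjMatrix ℝ).mulVec f) ≤ c * (f ⬝ᵥ f))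
    (S : Finset (Fin n)) :
    ∑ x ∈ S, ∑ y ∈ S, (G.adjMatrix ℝ) x y ≤
      (d : ℝ) * S.card * ((S.card : ℝ) / n + c) := by
  have hgap : ∀ f : Fin n → ℝ, ∑ x, f x = 0 →
      f ⬝ᵥ G.adjMatrix ℝ *ᵥ f ≤ (c * d) * (f ⬝ᵥ f) := by
    intro f hf
    have hnorm := hexp f hf
    rw [smul_mulVec, dotProduct_smul, smul_eq_mul,
      inv_mul_le_iff₀ (by exact_mod_cast hd)] at hnorm
    linarith
  have hS := G.isSymm_adjMatrix.dotProduct_mulVec_le_of_spectral_gap hreg.adjMatrix_mulVec_one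
    hgap ((S : Set (Fin n)).indicator 1)
  rw [← sum_sum_eq_indicator_dotProduct_mulVec, sum_indicator_one,
    indicator_one_dotProduct_self, Fintype.card_fin] at hS
  have hdropped : 0 ≤ c * d * ((#S : ℝ) ^ 2 / n) := by positivity
  linear_combination hS + hdropped

theorem stmt6 {n d : ℕ} (G : SimpleGraph (Fin n)) [DecidableRel G.Adj]
    (hreg : G.IsRegularOfDegree d) (hd : 0 < d) (c : ℝ) (hc0 : 0 < c) (hc1 : c < 1)
    (hexp : ∀ f : Fin n → ℝ, (∑ x, f x) = 0 →
      f ⬝ᵥ (((d : ℝ)⁻¹ • G.adjMatrix ℝ).mulVec f) ≤ c * (f ⬝ᵥ f))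
    (S : Finset (Fin n)) :
    ∑ x ∈ S, ∑ y ∈ S, (G.adjMatrix ℝ) x y ≤
      (d : ℝ) * S.card * ((S.card : ℝ) / n + c) :=
  stmt6_general G hreg hd c hc0 hexp S
end

section
/- Let G be an n-vertex d-regular graph with adjacency matrix A satisfying λ₂(A/d) ≤ c for some 0 < c < 1. Then for any vertex subset S with |S| ≤ αn, the number of vertices outside S adjacent to at least one vertex of S is at least (1/(c + √α) − 1)|S|. -/
/-!
Let `B = S ∪ N(S)`, `b = |B|`, and test the spectral bound on `f = 𝟙_B - (b/n)·𝟙`, which sums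
to zero. Since `A` is symmetric with row sums `d`, the bound reads
`⟨𝟙_B, A 𝟙_B⟩ / d - b²/n ≤ c (b - b²/n)`, and every vertex of `S` has all `d` neighbours in `B`,
so `|S| ≤ ⟨𝟙_B, A 𝟙_B⟩ / d ≤ c b + b²/n`. If `b ≤ √α n` this gives `|S| ≤ (c + √α) b`, and
otherwise `|S| ≤ α n ≤ √α b` directly; in both cases `|S| / (c + √α) ≤ |S| + |N(S)|`.
-/

open Matrix Finset
open scoped Classical

namespace Matrix

variable {V R : Type*} [Fintype V] [CommRing R]

theorem IsSymm.sub_smul_one_dotProduct_mulVec {M : Matrix V V R} (hM : M.IsSymm) {r : R}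
    (hr : M *ᵥ 1 = r • 1) (v : V → R) (a : R) :
    (v - a • 1) ⬝ᵥ M *ᵥ (v - a • 1) =
      v ⬝ᵥ M *ᵥ v - r * a * (2 * ∑ x, v x - Fintype.card V * a) := by
  have h1M : (1 : V → R) ⬝ᵥ M *ᵥ v = r * ∑ x, v x := by
    rw [dotProduct_mulVec, ← mulVec_transpose, hM.eq, dotProduct_comm, hr, dotProduct_smul,
      dotProduct_one, smul_eq_mul]
  simp only [mulVec_sub, mulVec_smul, hr, dotProduct_sub, sub_dotProduct, dotProduct_smul,
    smul_dotProduct, h1M, dotProduct_one, Pi.sub_apply, Pi.smul_apply, Pi.one_apply,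
    Finset.sum_sub_distrib, Finset.sum_const, Finset.card_univ, nsmul_eq_mul, smul_eq_mul, mul_one]
  ring

theorem indicator_one_dotProduct (B : Finset V) (w : V → R) :
    (B : Set V).indicator 1 ⬝ᵥ w = ∑ x ∈ B, w x := by
  simp [dotProduct, Set.indicator_apply]

end Matrix

namespace SimpleGraph

variable {V : Type*} [Fintype V] {G : SimpleGraph V} [DecidableRel G.Adj] {d : ℕ}

theorem IsRegularOfDegree.adjMatrix_mulVec_one_s7 (hreg : G.IsRegularOfDegree d) :
    G.adjMatrix ℝ *ᵥ 1 = (d : ℝ) • 1 := by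
  ext v
  simp [hreg v]

theorem IsRegularOfDegree.mul_card_le_indicator_dotProduct (hreg : G.IsRegularOfDegree d)
    {S B : Finset V} (hSB : S ⊆ B) (hnbr : ∀ x ∈ S, ∀ y, G.Adj x y → y ∈ B) :
    (d : ℝ) * #S ≤ (B : Set V).indicator 1 ⬝ᵥ G.adjMatrix ℝ *ᵥ (B : Set V).indicator 1 := by
  have hrow : ∀ x ∈ S, (G.adjMatrix ℝ *ᵥ (B : Set V).indicator 1) x = d := fun x hx => by
    rw [adjMatrix_mulVec_apply, sum_congr rfl fun y hy => Set.indicator_of_mem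
      (mem_coe.2 (hnbr x hx y ((mem_neighborFinset G x y).1 hy))) 1]
    simp [hreg x]
  calc (d : ℝ) * #S = ∑ x ∈ S, (G.adjMatrix ℝ *ᵥ (B : Set V).indicator 1) x := by
        rw [sum_congr rfl hrow, sum_const, nsmul_eq_mul, mul_comm]
    _ ≤ ∑ x ∈ B, (G.adjMatrix ℝ *ᵥ (B : Set V).indicator 1) x :=
        sum_le_sum_of_subset_of_nonneg hSB fun x _ _ => by
          rw [adjMatrix_mulVec_apply]
          exact sum_nonneg fun y _ => Set.indicator_nonneg (fun _ _ => zero_le_one) y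
    _ = _ := (indicator_one_dotProduct B _).symm

theorem IsRegularOfDegree.inv_mul_indicator_dotProduct_le (hreg : G.IsRegularOfDegree d)
    (hd : 0 < d) {c : ℝ} (hc : 0 ≤ c)
    (hexp : ∀ f : V → ℝ, ∑ x, f x = 0 → f ⬝ᵥ ((d : ℝ)⁻¹ • G.adjMatrix ℝ) *ᵥ f ≤ c * (f ⬝ᵥ f))
    (B : Finset V) :
    (d : ℝ)⁻¹ * ((B : Set V).indicator 1 ⬝ᵥ G.adjMatrix ℝ *ᵥ (B : Set V).indicator 1) ≤
      c * #B + (#B : ℝ) ^ 2 / Fintype.card V := by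
  set n : ℝ := (Fintype.card V : ℝ) with hn
  set b : ℝ := (#B : ℝ) with hb
  set χ : V → ℝ := (B : Set V).indicator 1
  set β : ℝ := b / n with hβ
  have hχsum : ∑ x, χ x = b := by rw [← dotProduct_one, indicator_one_dotProduct]; simp [b]
  have hχχ : χ ⬝ᵥ χ = b := by rw [indicator_one_dotProduct]; simp [χ, b, Set.indicator_apply]
  have hnβ : n * β = b := by
    rcases eq_or_ne n 0 with hn0 | hn0
    · have : b ≤ n := by rw [hn, hb]; exact_mod_cast B.card_le_univ
      simp [hn0, le_antisymm (hn0 ▸ this) (by positivity : (0 : ℝ) ≤ b)]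
    · exact mul_div_cancel₀ b hn0
  have hself : (χ - β • 1) ⬝ᵥ (χ - β • 1) = b - β * b := by
    have h := isSymm_one.sub_smul_one_dotProduct_mulVec (by rw [one_mulVec, one_smul]) χ β
    rw [one_mulVec, one_mulVec, hχsum, hχχ, ← hn, hnβ] at h
    linear_combination h
  have hspec := hexp (χ - β • 1) (by simp [Finset.sum_sub_distrib, hχsum, ← hn, hnβ])
  rw [smul_mulVec, dotProduct_smul, smul_eq_mul,
    G.isSymm_adjMatrix.sub_smul_one_dotProduct_mulVec hreg.adjMatrix_mulVec_one_s7, hself,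
    hχsum, ← hn, hnβ] at hspec
  have hd' : (d : ℝ) ≠ 0 := by positivity
  have hβb : 0 ≤ β * b := by positivity
  rw [mul_sub, ← mul_assoc, ← mul_assoc, inv_mul_cancel₀ hd', one_mul] at hspec
  have hb2 : b ^ 2 / n = β * b := by rw [hβ]; ring
  linarith [mul_nonneg hc hβb]

theorem IsRegularOfDegree.card_le_of_forall_adj_mem (hreg : G.IsRegularOfDegree d)
    (hd : 0 < d) {c : ℝ} (hc : 0 ≤ c)
    (hexp : ∀ f : V → ℝ, ∑ x, f x = 0 → f ⬝ᵥ ((d : ℝ)⁻¹ • G.adjMatrix ℝ) *ᵥ f ≤ c * (f ⬝ᵥ f))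
    {S B : Finset V} (hSB : S ⊆ B) (hnbr : ∀ x ∈ S, ∀ y, G.Adj x y → y ∈ B) :
    (#S : ℝ) ≤ c * #B + (#B : ℝ) ^ 2 / Fintype.card V := by
  refine le_trans ?_ (hreg.inv_mul_indicator_dotProduct_le hd hc hexp B)
  rw [le_inv_mul_iff₀ (by positivity)]
  exact hreg.mul_card_le_indicator_dotProduct hSB hnbr

end SimpleGraph

theorem le_add_sqrt_mul_of_le_add_sq_div {s b n c α : ℝ} (hb : 0 ≤ b) (hn : 0 ≤ n) (hc : 0 ≤ c)
    (hα : 0 ≤ α) (h₁ : s ≤ c * b + b ^ 2 / n) (h₂ : s ≤ α * n) : s ≤ (c + √α) * b := by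
  rcases le_or_gt b (√α * n) with hbn | hbn
  · have : b ^ 2 / n ≤ √α * b := by
      rcases hn.eq_or_lt with rfl | hn
      · simpa using mul_nonneg (Real.sqrt_nonneg α) hb
      rw [div_le_iff₀ hn]
      nlinarith
    nlinarith
  · calc s ≤ α * n := h₂
      _ = √α * (√α * n) := by rw [← mul_assoc, Real.mul_self_sqrt hα]
      _ ≤ √α * b := by gcongr
      _ ≤ (c + √α) * b := by nlinarith [mul_nonneg hc hb]

theorem stmt7_general {n d : ℕ} (G : SimpleGraph (Fin n)) [DecidableRel G.Adj]
    (hreg : G.IsRegularOfDegree d) (hd : 0 < d) (c : ℝ) (hc0 : 0 < c)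
    (hexp : ∀ f : Fin n → ℝ, (∑ x, f x) = 0 →
      f ⬝ᵥ (((d : ℝ)⁻¹ • G.adjMatrix ℝ).mulVec f) ≤ c * (f ⬝ᵥ f))
    (α : ℝ) (hα : 0 ≤ α) (S : Finset (Fin n)) (hS : (S.card : ℝ) ≤ α * n) :
    (1 / (c + Real.sqrt α) - 1) * S.card ≤
      ((Finset.univ.filter fun y => y ∉ S ∧ ∃ x ∈ S, G.Adj x y).card : ℝ) := by
  set T := Finset.univ.filter fun y => y ∉ S ∧ ∃ x ∈ S, G.Adj x y
  have hST : Disjoint S T := disjoint_left.2 fun x hxS hxT => (mem_filter.1 hxT).2.1 hxS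
  have hnbr : ∀ x ∈ S, ∀ y, G.Adj x y → y ∈ S ∪ T := fun x hx y hxy => by
    by_cases hy : y ∈ S
    · exact mem_union_left _ hy
    · exact mem_union_right _ (mem_filter.2 ⟨mem_univ y, hy, x, hx, hxy⟩)
  have hcard : (#(S ∪ T) : ℝ) = #S + #T := by rw [card_union_of_disjoint hST]; push_cast; rfl
  have hSB := hreg.card_le_of_forall_adj_mem hd hc0.le hexp subset_union_left hnbr
  rw [Fintype.card_fin] at hSB
  have hsb := le_add_sqrt_mul_of_le_add_sq_div (by positivity) (by positivity) hc0.le hα hSB hS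
  have hk : 0 < c + √α := by positivity
  rw [hcard] at hsb
  rw [div_sub_one hk.ne', div_mul_eq_mul_div, div_le_iff₀ hk]
  linarith

theorem stmt7 {n d : ℕ} (G : SimpleGraph (Fin n)) [DecidableRel G.Adj]
    (hreg : G.IsRegularOfDegree d) (hd : 0 < d) (c : ℝ) (hc0 : 0 < c) (hc1 : c < 1)
    (hexp : ∀ f : Fin n → ℝ, (∑ x, f x) = 0 →
      f ⬝ᵥ (((d : ℝ)⁻¹ • G.adjMatrix ℝ).mulVec f) ≤ c * (f ⬝ᵥ f))
    (α : ℝ) (hα : 0 ≤ α) (S : Finset (Fin n)) (hS : (S.card : ℝ) ≤ α * n) :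
    (1 / (c + Real.sqrt α) - 1) * S.card ≤
      ((Finset.univ.filter fun y => y ∉ S ∧ ∃ x ∈ S, G.Adj x y).card : ℝ) :=
  stmt7_general G hreg hd c hc0 hexp α hα S hS
end

section
/- Let G be an n-vertex d-regular graph with normalized adjacency matrix Ã = A/d whose second eigenvalue is λ₂. Let χ : [n] → [k] be a partition with each class of size at least cn, and suppose G has at most δdn monochromatic edges. For x ∈ [n] and a ∈ [k], let D(x,a) = ∑_{y ∈ χ⁻¹(a)} Ã_{xy}. Then for all a, b ∈ [k], the variance of D(x,b) over uniformly random x ∈ χ⁻¹(a) is at most O(λ₂/c + δ/(λ₂ c)). -/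
/-!
Put `M = A / d`, `S = χ⁻¹(a)`, `T = χ⁻¹(b)`, `D = M 1_T` and `V = ∑_{x ∈ S} (D x - D̄)²`, where `D̄`
is the mean of `D` on `S`. The form `Q(u, v) = λ₂⟨u, v⟩ - ⟨u, M v⟩` is positive semidefinite on
mean-zero vectors, so Cauchy–Schwarz applies to `f = (D - D̄) 1_S` and `g = 1_T - |T|/n`.
As `g` is constant on `S`, `Q(f, g) = -⟨f, M g⟩ = -V`. Since `|f| ≤ 1` and `f` lives on `S`,
`Q(f, f) ≤ λ₂ V + 2δn` by the bound on monochromatic edges, and likewise `Q(g, g) ≤ (λ₂ + 1) n`.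
Hence `V² ≤ (λ₂ V + 2δn)(λ₂ + 1) n`, which for `λ₂ ≤ 1` forces `V ≤ (3λ₂ + δ/λ₂) n`; for `λ₂ > 1`
the trivial bound `V ≤ n` suffices. Dividing by `|S| ≥ cn` gives the claim with `C = 3`.
-/

open Matrix Finset
open scoped Classical

section QuadraticForm

variable {ι : Type*} [Fintype ι] (M : Matrix ι ι ℝ)

theorem sq_sub_dotProduct_mulVec_le_of_rayleigh (hM : Mᵀ = M) {lam : ℝ}
    (hray : ∀ u : ι → ℝ, ∑ x, u x = 0 → u ⬝ᵥ M *ᵥ u ≤ lam * (u ⬝ᵥ u))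
    {f g : ι → ℝ} (hf : ∑ x, f x = 0) (hg : ∑ x, g x = 0) :
    (lam * (f ⬝ᵥ g) - f ⬝ᵥ M *ᵥ g) ^ 2 ≤
      (lam * (f ⬝ᵥ f) - f ⬝ᵥ M *ᵥ f) * (lam * (g ⬝ᵥ g) - g ⬝ᵥ M *ᵥ g) := by
  have hsymm : g ⬝ᵥ M *ᵥ f = f ⬝ᵥ M *ᵥ g := by
    rw [dotProduct_mulVec, ← mulVec_transpose, hM, dotProduct_comm]
  have hnonneg (r : ℝ) : 0 ≤ (lam * (g ⬝ᵥ g) - g ⬝ᵥ M *ᵥ g) * (r * r) +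
      2 * (lam * (f ⬝ᵥ g) - f ⬝ᵥ M *ᵥ g) * r + (lam * (f ⬝ᵥ f) - f ⬝ᵥ M *ᵥ f) := by
    have h := hray (f + r • g) (by simp [sum_add_distrib, ← mul_sum, hf, hg])
    simp only [mulVec_add, mulVec_smul, dotProduct_add, add_dotProduct, dotProduct_smul,
      smul_dotProduct, smul_eq_mul, hsymm, dotProduct_comm g f] at h
    linarith
  have := discrim_le_zero hnonneg
  rw [discrim] at this
  linarith

theorem neg_sum_le_dotProduct_mulVec (hM : ∀ i j, 0 ≤ M i j) (S : Finset ι) {f : ι → ℝ}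
    (hf : ∀ x, |f x| ≤ 1) (hfS : ∀ x ∉ S, f x = 0) :
    -∑ x ∈ S, ∑ y ∈ S, M x y ≤ f ⬝ᵥ M *ᵥ f := by
  have hterm (x y : ι) : -M x y ≤ f x * M x y * f y := by
    have : |f x * f y| ≤ 1 := by
      rw [abs_mul]; exact mul_le_one₀ (hf x) (abs_nonneg _) (hf y)
    nlinarith [(abs_le.mp this).1, hM x y]
  calc -∑ x ∈ S, ∑ y ∈ S, M x y ≤ ∑ x ∈ S, ∑ y ∈ S, f x * M x y * f y := by
        simp only [← sum_neg_distrib]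
        exact sum_le_sum fun x _ => sum_le_sum fun y _ => hterm x y
    _ = ∑ x, ∑ y, f x * M x y * f y := by
        rw [← sum_subset (subset_univ S) fun x _ hx => by simp [hfS x hx]]
        refine sum_congr rfl fun x _ => ?_
        exact sum_subset (subset_univ S) fun y _ hy => by simp [hfS y hy]
    _ = f ⬝ᵥ M *ᵥ f := by
        simp only [dotProduct, mulVec, mul_sum, mul_assoc]

theorem dotProduct_self_le_card {f : ι → ℝ} (hf : ∀ x, |f x| ≤ 1) :
    f ⬝ᵥ f ≤ Fintype.card ι := by
  calc f ⬝ᵥ f ≤ ∑ _x : ι, (1 : ℝ) := sum_le_sum fun x _ => by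
        rw [← abs_mul_abs_self]; exact mul_le_one₀ (hf x) (abs_nonneg _) (hf x)
    _ = Fintype.card ι := by simp

theorem sq_dotProduct_mulVec_le (hM : Mᵀ = M) (hM0 : ∀ i j, 0 ≤ M i j)
    (hrow : ∀ i, ∑ j, M i j = 1) {lam : ℝ} (hlam : 0 ≤ lam)
    (hray : ∀ u : ι → ℝ, ∑ x, u x = 0 → u ⬝ᵥ M *ᵥ u ≤ lam * (u ⬝ᵥ u))
    {S : Finset ι} {f g : ι → ℝ} (hf : ∑ x, f x = 0) (hg : ∑ x, g x = 0) (hfg : f ⬝ᵥ g = 0)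
    (hf1 : ∀ x, |f x| ≤ 1) (hfS : ∀ x ∉ S, f x = 0) (hg1 : ∀ x, |g x| ≤ 1) :
    (f ⬝ᵥ M *ᵥ g) ^ 2 ≤
      (lam * (f ⬝ᵥ f) + ∑ x ∈ S, ∑ y ∈ S, M x y) * (lam * Fintype.card ι + Fintype.card ι) := by
  have hcs := sq_sub_dotProduct_mulVec_le_of_rayleigh M hM hray hf hg
  rw [hfg, mul_zero, zero_sub, neg_sq] at hcs
  have hff := neg_sum_le_dotProduct_mulVec M hM0 S hf1 hfS
  have hgg := neg_sum_le_dotProduct_mulVec M hM0 univ hg1 fun x hx => absurd (mem_univ x) hx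
  simp only [hrow, sum_const, card_univ, nsmul_eq_mul, mul_one] at hgg
  have hgg' := mul_le_mul_of_nonneg_left (dotProduct_self_le_card hg1) hlam
  calc (f ⬝ᵥ M *ᵥ g) ^ 2 ≤ _ := hcs
    _ ≤ _ := mul_le_mul (by linarith) (by linarith) (by linarith [hray g hg])
        (by linarith [hray f hf])

end QuadraticForm

section CenteredOn

theorem sum_sub_mean {ι : Type*} (S : Finset ι) (h : ι → ℝ) :
    ∑ x ∈ S, (h x - (#S : ℝ)⁻¹ * ∑ y ∈ S, h y) = 0 := by
  rcases S.eq_empty_or_nonempty with rfl | hS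
  · simp
  · rw [sum_sub_distrib, sum_const, nsmul_eq_mul, mul_inv_cancel_left₀ (by simpa using hS.ne_empty),
      sub_self]

variable {ι : Type*} [DecidableEq ι]

noncomputable def centeredOn (S : Finset ι) (h : ι → ℝ) : ι → ℝ :=
  fun x => if x ∈ S then h x - (#S : ℝ)⁻¹ * ∑ y ∈ S, h y else 0

theorem centeredOn_of_notMem {S : Finset ι} (h : ι → ℝ) {x : ι} (hx : x ∉ S) :
    centeredOn S h x = 0 :=
  if_neg hx

theorem abs_centeredOn_le_one (S : Finset ι) {h : ι → ℝ} (h0 : ∀ x, 0 ≤ h x)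
    (h1 : ∀ x, h x ≤ 1) (x : ι) :
    |centeredOn S h x| ≤ 1 := by
  have hm0 : 0 ≤ (#S : ℝ)⁻¹ * ∑ y ∈ S, h y :=
    mul_nonneg (by positivity) (sum_nonneg fun y _ => h0 y)
  have hm1 : (#S : ℝ)⁻¹ * ∑ y ∈ S, h y ≤ 1 :=
    inv_mul_le_one_of_le₀ (by simpa using sum_le_card_nsmul S h 1 fun y _ => h1 y) (by positivity)
  unfold centeredOn
  split_ifs
  · exact abs_le.mpr ⟨by linarith [h0 x], by linarith [h1 x]⟩
  · simp

variable [Fintype ι] (S : Finset ι) (h : ι → ℝ)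

theorem centeredOn_dotProduct (v : ι → ℝ) :
    centeredOn S h ⬝ᵥ v = ∑ x ∈ S, (h x - (#S : ℝ)⁻¹ * ∑ y ∈ S, h y) * v x := by
  simp only [dotProduct, centeredOn, ite_mul, zero_mul, sum_ite_mem, univ_inter]

theorem sum_centeredOn : ∑ x, centeredOn S h x = 0 := by
  simp only [centeredOn, sum_ite_mem, univ_inter]
  exact sum_sub_mean S h

theorem centeredOn_dotProduct_sub_const (t : ℝ) :
    centeredOn S h ⬝ᵥ (fun x => h x - t) = ∑ x ∈ S, (h x - (#S : ℝ)⁻¹ * ∑ y ∈ S, h y) ^ 2 := by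
  set m := (#S : ℝ)⁻¹ * ∑ y ∈ S, h y
  calc centeredOn S h ⬝ᵥ (fun x => h x - t) = ∑ x ∈ S, (h x - m) * (h x - t) :=
        centeredOn_dotProduct S h _
    _ = ∑ x ∈ S, ((h x - m) ^ 2 + (h x - m) * (m - t)) := sum_congr rfl fun _ _ => by ring
    _ = ∑ x ∈ S, (h x - m) ^ 2 := by
        rw [sum_add_distrib, ← sum_mul, sum_sub_mean, zero_mul, add_zero]

theorem centeredOn_dotProduct_self :
    centeredOn S h ⬝ᵥ centeredOn S h = ∑ x ∈ S, (h x - (#S : ℝ)⁻¹ * ∑ y ∈ S, h y) ^ 2 := by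
  rw [centeredOn_dotProduct, ← centeredOn_dotProduct_sub_const S h ((#S : ℝ)⁻¹ * ∑ y ∈ S, h y),
    centeredOn_dotProduct]
  exact sum_congr rfl fun x hx => by simp [centeredOn, hx]

theorem centeredOn_dotProduct_eq_zero {v : ι → ℝ} {c : ℝ} (hv : ∀ x ∈ S, v x = c) :
    centeredOn S h ⬝ᵥ v = 0 := by
  rw [centeredOn_dotProduct, sum_congr rfl fun x hx => by rw [hv x hx], ← sum_mul,
    sum_sub_mean, zero_mul]

end CenteredOn

section CenteredIndicator

variable {ι : Type*} [Fintype ι] [DecidableEq ι] (T : Finset ι)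

noncomputable def centeredIndicator : ι → ℝ :=
  fun y => (if y ∈ T then 1 else 0) - #T / Fintype.card ι

theorem sum_centeredIndicator : ∑ x, centeredIndicator T x = 0 := by
  rcases isEmpty_or_nonempty ι with hι | hι
  · simp
  · simp only [centeredIndicator, sum_sub_distrib, sum_boole, sum_const, card_univ, nsmul_eq_mul]
    rw [mul_div_cancel₀ _ (by positivity), filter_mem_eq_inter, univ_inter, sub_self]

theorem abs_centeredIndicator_le_one (x : ι) : |centeredIndicator T x| ≤ 1 := by
  have ht0 : (0 : ℝ) ≤ #T / Fintype.card ι := by positivity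
  have ht1 : (#T : ℝ) / Fintype.card ι ≤ 1 :=
    div_le_one_of_le₀ (by exact_mod_cast card_le_univ T) (by positivity)
  unfold centeredIndicator
  split_ifs <;> exact abs_le.mpr ⟨by linarith, by linarith⟩

theorem mulVec_centeredIndicator {M : Matrix ι ι ℝ} (hrow : ∀ i, ∑ j, M i j = 1) :
    M *ᵥ centeredIndicator T = fun x => ∑ y ∈ T, M x y - #T / Fintype.card ι := by
  ext x
  simp only [centeredIndicator, mulVec, dotProduct, mul_sub, mul_boole, sum_sub_distrib,
    sum_ite_mem, univ_inter, ← sum_mul, hrow, one_mul]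

end CenteredIndicator

theorem le_three_mul_add_div_mul_of_sq_le {lam δ V n : ℝ} (hlam : 0 < lam) (hlam1 : lam ≤ 1)
    (hδ : 0 ≤ δ) (hn : 0 ≤ n)
    (h : V ^ 2 ≤ (lam * V + 2 * δ * n) * (lam * n + n)) :
    V ≤ (3 * lam + δ / lam) * n := by
  obtain ⟨u, hu, rfl⟩ : ∃ u, 0 ≤ u ∧ δ = lam * u := ⟨δ / lam, by positivity, by field_simp⟩
  rw [mul_div_cancel_left₀ _ hlam.ne']
  by_contra! hcon
  have hV : 0 ≤ V := (mul_nonneg (by linarith) hn).trans hcon.le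
  have h2 : V ^ 2 ≤ 2 * lam * n * V + 4 * lam * u * n ^ 2 := by
    have hfactor : 0 ≤ lam * V + 2 * (lam * u) * n := by positivity
    nlinarith [mul_nonneg hfactor (mul_nonneg (sub_nonneg.mpr hlam1) hn)]
  nlinarith [mul_pos (sub_pos.mpr hcon) (by nlinarith : 0 < V + (3 * lam + u) * n - 2 * lam * n),
    mul_nonneg hu hn, mul_nonneg hlam.le hn, sq_nonneg (u * n)]

theorem sum_sq_sub_mean_le_of_rayleigh {ι : Type*} [Fintype ι] (M : Matrix ι ι ℝ)
    (hM : Mᵀ = M) (hM0 : ∀ i j, 0 ≤ M i j) (hrow : ∀ i, ∑ j, M i j = 1) {lam : ℝ} (hlam : 0 < lam)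
    (hray : ∀ u : ι → ℝ, ∑ x, u x = 0 → u ⬝ᵥ M *ᵥ u ≤ lam * (u ⬝ᵥ u))
    {S T : Finset ι} (hST : S ⊆ T ∨ Disjoint S T) {δ : ℝ} (hδ : 0 ≤ δ)
    (hmono : ∑ x ∈ S, ∑ y ∈ S, M x y ≤ 2 * δ * Fintype.card ι) :
    ∑ x ∈ S, (∑ y ∈ T, M x y - (#S : ℝ)⁻¹ * ∑ x' ∈ S, ∑ y ∈ T, M x' y) ^ 2 ≤
      (3 * lam + δ / lam) * Fintype.card ι := by
  rw [← centeredOn_dotProduct_self]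
  set D : ι → ℝ := fun x => ∑ y ∈ T, M x y
  set f := centeredOn S D
  have hf1 : ∀ x, |f x| ≤ 1 :=
    abs_centeredOn_le_one S (fun x => sum_nonneg fun y _ => hM0 x y)
      fun x => (sum_le_univ_sum_of_nonneg (hM0 x)).trans (hrow x).le
  by_cases hlam1 : lam ≤ 1
  · have hfg : f ⬝ᵥ centeredIndicator T = 0 := by
      rcases hST with hST | hST
      · exact centeredOn_dotProduct_eq_zero S D fun x hx => by
          rw [centeredIndicator, if_pos (hST hx)]
      · exact centeredOn_dotProduct_eq_zero S D fun x hx => by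
          rw [centeredIndicator, if_neg (disjoint_left.mp hST hx)]
    have hfMg : f ⬝ᵥ M *ᵥ centeredIndicator T = f ⬝ᵥ f := by
      rw [mulVec_centeredIndicator T hrow, centeredOn_dotProduct_sub_const,
        centeredOn_dotProduct_self]
    have hsq := hfMg ▸ sq_dotProduct_mulVec_le M hM hM0 hrow hlam.le hray (sum_centeredOn S D)
      (sum_centeredIndicator T) hfg hf1 (fun x => centeredOn_of_notMem D)
      (abs_centeredIndicator_le_one T)
    exact le_three_mul_add_div_mul_of_sq_le hlam hlam1 hδ (Nat.cast_nonneg _)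
      (hsq.trans (mul_le_mul_of_nonneg_right (by linarith) (by positivity)))
  · calc f ⬝ᵥ f ≤ Fintype.card ι := dotProduct_self_le_card hf1
      _ ≤ (3 * lam + δ / lam) * Fintype.card ι :=
        le_mul_of_one_le_left (Nat.cast_nonneg _) (by linarith [div_nonneg hδ hlam.le])

theorem inv_mul_le_div_of_le_mul {V K c n s : ℝ} (hc : 0 < c) (hK : 0 ≤ K) (hs : 0 ≤ s)
    (hcn : c * n ≤ s) (hV : V ≤ K * n) : s⁻¹ * V ≤ K / c := by
  rcases hs.eq_or_lt with rfl | hs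
  · simpa using div_nonneg hK hc.le
  · rw [inv_mul_le_iff₀ hs]
    calc V ≤ K * n := hV
      _ ≤ K * (s / c) := mul_le_mul_of_nonneg_left ((le_div_iff₀ hc).mpr (by linarith)) hK
      _ = s * (K / c) := by ring

theorem sum_sum_filter_le_sum_sum_ite {ι κ : Type*} [Fintype ι] [DecidableEq κ] (χ : ι → κ)
    {A : ι → ι → ℝ} (hA : ∀ i j, 0 ≤ A i j) (a : κ) :
    ∑ x ∈ univ.filter (χ · = a), ∑ y ∈ univ.filter (χ · = a), A x y ≤
      ∑ x, ∑ y, if χ x = χ y then A x y else 0 := by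
  have hite (x y : ι) : 0 ≤ if χ x = χ y then A x y else 0 := ite_nonneg (hA x y) le_rfl
  calc ∑ x ∈ univ.filter (χ · = a), ∑ y ∈ univ.filter (χ · = a), A x y
      = ∑ x ∈ univ.filter (χ · = a), ∑ y ∈ univ.filter (χ · = a),
          if χ x = χ y then A x y else 0 :=
        sum_congr rfl fun x hx => sum_congr rfl fun y hy =>
          (if_pos ((mem_filter.1 hx).2.trans (mem_filter.1 hy).2.symm)).symm
    _ ≤ ∑ x, ∑ y, if χ x = χ y then A x y else 0 :=
        (sum_le_sum fun x _ => sum_le_univ_sum_of_nonneg (hite x)).trans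
          (sum_le_univ_sum_of_nonneg fun x => sum_nonneg fun y _ => hite x y)

theorem stmt8 :
    ∃ C : ℝ, 0 < C ∧
      ∀ (n k d : ℕ), 0 < d →
      ∀ A : Matrix (Fin n) (Fin n) ℝ,
        (∀ i j, A i j = A j i) →
        (∀ i j, A i j = 0 ∨ A i j = 1) →
        (∀ i, A i i = 0) →
        (∀ i, ∑ j, A i j = d) →
      ∀ lam2 : ℝ, 0 < lam2 →
        (∀ f : Fin n → ℝ, (∑ x, f x) = 0 →
          f ⬝ᵥ (((d : ℝ)⁻¹ • A).mulVec f) ≤ lam2 * (f ⬝ᵥ f)) →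
      ∀ (χ : Fin n → Fin k) (c δ : ℝ), 0 < c → 0 ≤ δ →
        (∀ a : Fin k, c * n ≤ ((Finset.univ.filter fun x => χ x = a).card : ℝ)) →
        ((∑ x, ∑ y, (if χ x = χ y then A x y else 0)) ≤ 2 * δ * d * n) →
      ∀ a b : Fin k,
        (((Finset.univ.filter fun x => χ x = a).card : ℝ))⁻¹ *
          ∑ x ∈ Finset.univ.filter (fun x => χ x = a),
            ((∑ y ∈ Finset.univ.filter (fun y => χ y = b), (d : ℝ)⁻¹ * A x y) -
              (((Finset.univ.filter fun x => χ x = a).card : ℝ))⁻¹ *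
                ∑ x' ∈ Finset.univ.filter (fun x => χ x = a),
                  ∑ y ∈ Finset.univ.filter (fun y => χ y = b), (d : ℝ)⁻¹ * A x' y) ^ 2
          ≤ C * (lam2 / c + δ / (lam2 * c)) := by
  refine ⟨3, by norm_num, ?_⟩
  intro n k d hd A hsymm h01 _ hrow lam2 hlam2 hray χ c δ hc hδ hsize hmono a b
  have hd' : (0 : ℝ) < d := by exact_mod_cast hd
  have hA0 : ∀ i j, 0 ≤ A i j := fun i j => by rcases h01 i j with h | h <;> simp [h]
  set M : Matrix (Fin n) (Fin n) ℝ := (d : ℝ)⁻¹ • A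
  set S := univ.filter fun x => χ x = a
  set T := univ.filter fun y => χ y = b
  have hST : S ⊆ T ∨ Disjoint S T := by
    rcases eq_or_ne a b with rfl | hab
    · exact Or.inl subset_rfl
    · exact Or.inr (disjoint_filter.mpr fun x _ hxa hxb => hab (hxa.symm.trans hxb))
  have hmonoS : ∑ x ∈ S, ∑ y ∈ S, M x y ≤ 2 * δ * Fintype.card (Fin n) := by
    simp only [M, Matrix.smul_apply, smul_eq_mul, ← mul_sum, Fintype.card_fin]
    calc (d : ℝ)⁻¹ * ∑ x ∈ S, ∑ y ∈ S, A x y ≤ (d : ℝ)⁻¹ * (2 * δ * d * n) :=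
          mul_le_mul_of_nonneg_left ((sum_sum_filter_le_sum_sum_ite χ hA0 a).trans hmono)
            (by positivity)
      _ = 2 * δ * n := by field_simp
  have hvar := sum_sq_sub_mean_le_of_rayleigh M (by ext i j; simp [M, hsymm])
    (fun i j => mul_nonneg (by positivity) (hA0 i j))
    (fun i => by simp [M, ← mul_sum, hrow, hd'.ne']) hlam2 hray hST hδ hmonoS
  calc _ ≤ (3 * lam2 + δ / lam2) / c :=
        inv_mul_le_div_of_le_mul hc (by positivity) (Nat.cast_nonneg _) (hsize a)
          (by simpa [M] using hvar)
    _ ≤ 3 * (lam2 / c + δ / (lam2 * c)) := by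
        rw [add_div, div_div, mul_div_assoc, mul_add]
        linarith [div_nonneg hδ (mul_pos hlam2 hc).le]
end

section
/- Let G be an n-vertex graph with adjacency matrix A, Ã = A/d for some d > 0, and χ : [n] → [k] a partition with each class of size at least cn, with partition matrix Z (indicator matrix) and B = ZᵀZ. Suppose for any a, b ∈ [k], the variance of D(x,b) = ∑_{y∈χ⁻¹(b)} Ã_{xy} over uniform x ∈ χ⁻¹(a) is at most δ. Then for W = Z M(Ã,χ) B⁻¹ Zᵀ, where M(Ã,χ) = B⁻¹ Zᵀ Ã Z, it holds for each a ∈ [k] that ‖Ã·(Z_a/‖Z_a‖) − W·(Z_a/‖Z_a‖)‖² ≤ δ/c. -/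
open Matrix Finset
open scoped Classical

/-! With `P = Z B⁻¹ Zᵀ`, the orthogonal projection onto vectors constant on the classes, the
model `W` equals `P Ã P`, and `P Z_a = Z_a`. Hence `(Ã - W) Z_a = (1 - P) (Ã Z_a)` is the vector
`x ↦ D(x,a) - (mean of D(·,a) over the class of x)`, whose squared norm is
`∑_b |χ⁻¹(b)| · Var_b ≤ n δ`, while `‖Z_a‖² = |χ⁻¹(a)| ≥ c n`. -/

section GramProjection

variable {m n R : Type*} [Fintype m] [Fintype n] [DecidableEq n] [CommRing R]

lemma compression_mul_self {Z : Matrix m n R} (hZ : IsUnit (Zᵀ * Z).det) (M : Matrix m m R) :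
    Z * ((Zᵀ * Z)⁻¹ * Zᵀ * M * Z) * (Zᵀ * Z)⁻¹ * Zᵀ * Z = Z * (Zᵀ * Z)⁻¹ * Zᵀ * (M * Z) := by
  simp only [Matrix.mul_assoc, nonsing_inv_mul _ hZ, Matrix.mul_one]

lemma compression_mulVec_mulVec {Z : Matrix m n R} (hZ : IsUnit (Zᵀ * Z).det)
    (M : Matrix m m R) (w : n → R) :
    (Z * ((Zᵀ * Z)⁻¹ * Zᵀ * M * Z) * (Zᵀ * Z)⁻¹ * Zᵀ) *ᵥ (Z *ᵥ w) =
      (Z * (Zᵀ * Z)⁻¹ * Zᵀ) *ᵥ (M *ᵥ (Z *ᵥ w)) := by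
  rw [mulVec_mulVec, compression_mul_self hZ, mulVec_mulVec, mulVec_mulVec]
  simp only [Matrix.mul_assoc]

end GramProjection

section Partition

variable {ι κ : Type*} [DecidableEq κ]

def partitionMatrix (R : Type*) [Zero R] [One R] (χ : ι → κ) : Matrix ι κ R :=
  of fun x a => if χ x = a then 1 else 0

lemma partitionMatrix_mulVec [Fintype κ] {R : Type*} [Semiring R] (χ : ι → κ) (w : κ → R) :
    partitionMatrix R χ *ᵥ w = w ∘ χ := by
  ext x
  simp [partitionMatrix, mulVec, dotProduct]

variable [Fintype ι]

def blockMean {R : Type*} [DivisionRing R] (χ : ι → κ) (u : ι → R) (b : κ) : R :=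
  (#{x | χ x = b} : R)⁻¹ * ∑ x with χ x = b, u x

lemma card_fiber_ne_zero {R : Type*} [AddMonoidWithOne R] [CharZero R] {χ : ι → κ}
    (hχ : Function.Surjective χ) (a : κ) : (#{x | χ x = a} : R) ≠ 0 := by
  obtain ⟨x, hx⟩ := hχ a
  exact Nat.cast_ne_zero.mpr (card_ne_zero_of_mem (mem_filter.mpr ⟨mem_univ x, hx⟩))

lemma sum_sq_sub_blockMean_le [Fintype κ] {R : Type*} [Field R] [LinearOrder R]
    [IsStrictOrderedRing R] (χ : ι → κ) (u : ι → R) {δ : R}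
    (hvar : ∀ b, (#{x | χ x = b} : R)⁻¹ * ∑ x with χ x = b, (u x - blockMean χ u b) ^ 2 ≤ δ) :
    ∑ x, (u x - blockMean χ u (χ x)) ^ 2 ≤ Fintype.card ι * δ := by
  have hfiber : ∀ b, ∑ x with χ x = b, (u x - blockMean χ u (χ x)) ^ 2 ≤
      #{x | χ x = b} * δ := by
    intro b
    rw [sum_congr rfl fun x hx => by rw [(mem_filter.mp hx).2]]
    rcases eq_or_ne #{x | χ x = b} 0 with h0 | h0
    · simp [card_eq_zero.mp h0]
    · exact (inv_mul_le_iff₀ (by positivity)).mp (hvar b)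
  calc ∑ x, (u x - blockMean χ u (χ x)) ^ 2
      = ∑ b, ∑ x with χ x = b, (u x - blockMean χ u (χ x)) ^ 2 := (sum_fiberwise _ _ _).symm
    _ ≤ ∑ b, (#{x | χ x = b} : R) * δ := sum_le_sum fun b _ => hfiber b
    _ = Fintype.card ι * δ := by
      rw [← sum_mul, ← Nat.cast_sum, ← card_eq_sum_card_fiberwise fun x _ => mem_univ (χ x),
        card_univ]

variable (R : Type*) (χ : ι → κ)

lemma sum_partitionMatrix_mul [Semiring R] (a : κ) (f : ι → R) :
    ∑ x, partitionMatrix R χ x a * f x = ∑ x with χ x = a, f x := by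
  simp [partitionMatrix, Finset.sum_filter]

lemma transpose_partitionMatrix_mulVec [Semiring R] (u : ι → R) :
    (partitionMatrix R χ)ᵀ *ᵥ u = fun b => ∑ x with χ x = b, u x := by
  ext b
  exact sum_partitionMatrix_mul R χ b u

lemma mulVec_partitionMatrix_col [CommSemiring R] (M : Matrix ι ι R) (a : κ) :
    M *ᵥ (fun y => partitionMatrix R χ y a) = fun x => ∑ y with χ y = a, M x y := by
  ext x
  simp only [mulVec, dotProduct, mul_comm (M x _), sum_partitionMatrix_mul]

lemma partitionMatrix_col_dotProduct_self [Semiring R] (a : κ) :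
    (fun x => partitionMatrix R χ x a) ⬝ᵥ (fun x => partitionMatrix R χ x a) =
      (#{x | χ x = a} : R) := by
  rw [dotProduct, sum_partitionMatrix_mul]
  simp [partitionMatrix, Finset.filter_filter]

lemma transpose_partitionMatrix_mul_self [Semiring R] :
    (partitionMatrix R χ)ᵀ * partitionMatrix R χ = diagonal fun a => (#{x | χ x = a} : R) := by
  ext b e
  rw [Matrix.mul_apply]
  simp only [transpose_apply, sum_partitionMatrix_mul]
  rw [sum_congr rfl fun x hx => show partitionMatrix R χ x e = if b = e then 1 else 0 by
    simp [partitionMatrix, (mem_filter.mp hx).2]]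
  simp [diagonal_apply]

variable [Fintype κ] [Field R] [CharZero R] {χ}

lemma diagonal_inv_card_mul_gram (hχ : Function.Surjective χ) :
    (diagonal fun a => (#{x | χ x = a} : R)⁻¹) *
      ((partitionMatrix R χ)ᵀ * partitionMatrix R χ) = 1 := by
  rw [transpose_partitionMatrix_mul_self, diagonal_mul_diagonal, ← diagonal_one]
  exact congrArg diagonal (funext fun a => inv_mul_cancel₀ (card_fiber_ne_zero hχ a))

lemma partitionMatrix_mul_inv_gram_mul_transpose_mulVec (hχ : Function.Surjective χ)
    (u : ι → R) :
    (partitionMatrix R χ * ((partitionMatrix R χ)ᵀ * partitionMatrix R χ)⁻¹ *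
      (partitionMatrix R χ)ᵀ) *ᵥ u = fun x => blockMean χ u (χ x) := by
  rw [inv_eq_left_inv (diagonal_inv_card_mul_gram R hχ), ← mulVec_mulVec, ← mulVec_mulVec,
    transpose_partitionMatrix_mulVec, partitionMatrix_mulVec]
  ext x
  simp [mulVec_diagonal, blockMean]

lemma sub_compression_mulVec_partitionMatrix_col (hχ : Function.Surjective χ)
    (M : Matrix ι ι R) (a : κ) :
    (M - partitionMatrix R χ * (((partitionMatrix R χ)ᵀ * partitionMatrix R χ)⁻¹ *
        (partitionMatrix R χ)ᵀ * M * partitionMatrix R χ) *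
        ((partitionMatrix R χ)ᵀ * partitionMatrix R χ)⁻¹ * (partitionMatrix R χ)ᵀ) *ᵥ
        (fun x => partitionMatrix R χ x a) =
      fun x => (M *ᵥ fun y => partitionMatrix R χ y a) x -
        blockMean χ (M *ᵥ fun y => partitionMatrix R χ y a) (χ x) := by
  have hcol : (fun x => partitionMatrix R χ x a) = partitionMatrix R χ *ᵥ Pi.single a 1 := by
    rw [mulVec_single_one]
    rfl
  rw [sub_mulVec, hcol,
    compression_mulVec_mulVec (isUnit_det_of_left_inverse (diagonal_inv_card_mul_gram R hχ)),
    partitionMatrix_mul_inv_gram_mul_transpose_mulVec R hχ]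
  rfl

end Partition

theorem stmt9_general {n k : ℕ} (A : Matrix (Fin n) (Fin n) ℝ) (d : ℝ)
    (χ : Fin n → Fin k) (c δ : ℝ) (hc : 0 < c)
    (Z : Matrix (Fin n) (Fin k) ℝ) (hZ : ∀ x a, Z x a = if χ x = a then 1 else 0)
    (hclass : ∀ a : Fin k, c * n ≤ ((Finset.univ.filter fun x => χ x = a).card : ℝ))
    (hvar : ∀ a b : Fin k,
      (((Finset.univ.filter fun x => χ x = a).card : ℝ))⁻¹ *
        ∑ x ∈ Finset.univ.filter (fun x => χ x = a),
          ((∑ y ∈ Finset.univ.filter (fun y => χ y = b), d⁻¹ * A x y) -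
            (((Finset.univ.filter fun x => χ x = a).card : ℝ))⁻¹ *
              ∑ x' ∈ Finset.univ.filter (fun x => χ x = a),
                ∑ y ∈ Finset.univ.filter (fun y => χ y = b), d⁻¹ * A x' y) ^ 2 ≤ δ) :
    ∀ a : Fin k,
      ((((d⁻¹ • A) -
          Z * ((Zᵀ * Z)⁻¹ * Zᵀ * (d⁻¹ • A) * Z) * (Zᵀ * Z)⁻¹ * Zᵀ).mulVec
            (fun x => Z x a)) ⬝ᵥ
        (((d⁻¹ • A) -
          Z * ((Zᵀ * Z)⁻¹ * Zᵀ * (d⁻¹ • A) * Z) * (Zᵀ * Z)⁻¹ * Zᵀ).mulVec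
            (fun x => Z x a))) /
        ((fun x => Z x a) ⬝ᵥ (fun x => Z x a))
      ≤ δ / c := by
  intro a
  obtain rfl : Z = partitionMatrix ℝ χ := Matrix.ext hZ
  have hδ : 0 ≤ δ := le_trans (by positivity) (hvar a a)
  rcases Nat.eq_zero_or_pos n with rfl | hn
  · simp only [dotProduct, univ_eq_empty, sum_empty, div_zero]
    positivity
  have hχ : Function.Surjective χ := fun b => by
    obtain ⟨x, hx⟩ := card_pos.mp (by exact_mod_cast (by positivity : 0 < c * n).trans_le (hclass b))
    exact ⟨x, (mem_filter.mp hx).2⟩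
  rw [sub_compression_mulVec_partitionMatrix_col ℝ hχ, partitionMatrix_col_dotProduct_self,
    mulVec_partitionMatrix_col, dotProduct]
  simp only [← sq, Matrix.smul_apply, smul_eq_mul]
  calc _ ≤ Fintype.card (Fin n) * δ / (c * n) :=
        div_le_div₀ (by positivity) (sum_sq_sub_blockMean_le χ _ fun b => hvar b a)
          (by positivity) (hclass a)
    _ = δ / c := by
      rw [Fintype.card_fin]
      field_simp

theorem stmt9 {n k : ℕ} (A : Matrix (Fin n) (Fin n) ℝ) (d : ℝ) (hd : 0 < d)
    (χ : Fin n → Fin k) (c δ : ℝ) (hc : 0 < c) (hδ : 0 ≤ δ)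
    (Z : Matrix (Fin n) (Fin k) ℝ) (hZ : ∀ x a, Z x a = if χ x = a then 1 else 0)
    (hclass : ∀ a : Fin k, c * n ≤ ((Finset.univ.filter fun x => χ x = a).card : ℝ))
    (hvar : ∀ a b : Fin k,
      (((Finset.univ.filter fun x => χ x = a).card : ℝ))⁻¹ *
        ∑ x ∈ Finset.univ.filter (fun x => χ x = a),
          ((∑ y ∈ Finset.univ.filter (fun y => χ y = b), d⁻¹ * A x y) -
            (((Finset.univ.filter fun x => χ x = a).card : ℝ))⁻¹ *
              ∑ x' ∈ Finset.univ.filter (fun x => χ x = a),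
                ∑ y ∈ Finset.univ.filter (fun y => χ y = b), d⁻¹ * A x' y) ^ 2 ≤ δ) :
    ∀ a : Fin k,
      ((((d⁻¹ • A) -
          Z * ((Zᵀ * Z)⁻¹ * Zᵀ * (d⁻¹ • A) * Z) * (Zᵀ * Z)⁻¹ * Zᵀ).mulVec
            (fun x => Z x a)) ⬝ᵥ
        (((d⁻¹ • A) -
          Z * ((Zᵀ * Z)⁻¹ * Zᵀ * (d⁻¹ • A) * Z) * (Zᵀ * Z)⁻¹ * Zᵀ).mulVec
            (fun x => Z x a))) /
        ((fun x => Z x a) ⬝ᵥ (fun x => Z x a))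
      ≤ δ / c :=
  stmt9_general A d χ c δ hc Z hZ hclass hvar
end

section
/- Let M be a 3×3 reversible row-stochastic matrix with nonnegative entries, zero diagonal, stationary distribution π satisfying max_a π_a ≤ 1/2 − γ for some γ > 0. Then any two distinct rows M^{(a)}, M^{(b)} of M satisfy ‖M^{(a)} − M^{(b)}‖ ≥ γ. -/
/-!
Let `c` be the third state. Detailed balance and the row sums give the stationarity equation
`π c = π a (1 - M a b) + π b (1 - M b a)`. If both `M a b` and `M b a` were below `γ`,
this would force `π c > (1 - π c)(1 - γ)`, which is incompatible with `π c ≤ 1/2 - γ`. On the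
other hand the distance between rows `a` and `b` dominates `|M a b - M b b| = M a b` and
`|M a a - M b a| = M b a`.
-/

open Matrix Finset

theorem sum_mul_eq_of_detailed_balance {R n : Type*} [CommSemiring R] [Fintype n]
    (M : Matrix n n R) (π : n → R) (hrow : ∀ a, ∑ b, M a b = 1)
    (hrev : ∀ a b, π a * M a b = π b * M b a) (b : n) :
    ∑ a, π a * M a b = π b := by
  simp_rw [hrev _ b, ← mul_sum, hrow, mul_one]

theorem Fin.sum_univ_three_of_ne {α : Type*} [AddCommMonoid α] (f : Fin 3 → α) {a b c : Fin 3}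
    (hab : a ≠ b) (hac : a ≠ c) (hbc : b ≠ c) :
    ∑ j, f j = f a + f b + f c := by
  fin_cases a <;> fin_cases b <;> fin_cases c <;> simp_all [Fin.sum_univ_three] <;> abel

theorem Real.abs_apply_le_sqrt_sum_sq {ι : Type*} [Fintype ι] (f : ι → ℝ) (j : ι) :
    |f j| ≤ √(∑ i, f i ^ 2) :=
  Real.abs_le_sqrt (single_le_sum (fun i _ => sq_nonneg (f i)) (mem_univ j))

theorem le_max_of_balance {p q r x y γ : ℝ} (hp : 0 ≤ p) (hq : 0 ≤ q) (hr : 0 ≤ r)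
    (hx : 0 ≤ x) (hsum : p + q + r = 1) (hbal : r = p * (1 - x) + q * (1 - y))
    (hrγ : r ≤ 1 / 2 - γ) : γ ≤ max x y := by
  by_contra! h
  have hxγ : x < γ := (le_max_left x y).trans_lt h
  have hyγ : y < γ := (le_max_right x y).trans_lt h
  have hlower : (1 - r) * (1 - γ) ≤ r := by
    nlinarith [mul_le_mul_of_nonneg_left hxγ.le hp, mul_le_mul_of_nonneg_left hyγ.le hq]
  nlinarith [mul_pos (hx.trans_lt hxγ) (show (0 : ℝ) < 3 / 2 - γ by linarith)]

theorem stmt12_general (M : Matrix (Fin 3) (Fin 3) ℝ)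
    (hnn : ∀ a b, 0 ≤ M a b) (hrow : ∀ a, ∑ b, M a b = 1) (hdiag : ∀ a, M a a = 0)
    (π : Fin 3 → ℝ) (hπpos : ∀ a, 0 < π a) (hπsum : (∑ a, π a) = 1)
    (hrev : ∀ a b, π a * M a b = π b * M b a)
    (γ : ℝ) (hmax : ∀ a, π a ≤ 1 / 2 - γ) :
    ∀ a b : Fin 3, a ≠ b → γ ≤ Real.sqrt (∑ j, (M a j - M b j) ^ 2) := by
  intro a b hab
  obtain ⟨c, hca, hcb⟩ : ∃ c, c ≠ a ∧ c ≠ b := by revert a b; decide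
  have hrow_a := hrow a
  have hrow_b := hrow b
  rw [Fin.sum_univ_three_of_ne _ hab hca.symm hcb.symm, hdiag] at hrow_a
  rw [Fin.sum_univ_three_of_ne _ hab.symm hcb.symm hca.symm, hdiag] at hrow_b
  have hstat := sum_mul_eq_of_detailed_balance M π hrow hrev c
  rw [Fin.sum_univ_three_of_ne _ hab hca.symm hcb.symm, hdiag, mul_zero, add_zero] at hstat
  have hmass := hπsum
  rw [Fin.sum_univ_three_of_ne _ hab hca.symm hcb.symm] at hmass
  have hbal : π c = π a * (1 - M a b) + π b * (1 - M b a) := by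
    rw [← hstat]; congr 2 <;> linarith
  have hγle : γ ≤ max (M a b) (M b a) :=
    le_max_of_balance (hπpos a).le (hπpos b).le (hπpos c).le (hnn a b) hmass hbal (hmax c)
  have hdist := Real.abs_apply_le_sqrt_sum_sq (fun j => M a j - M b j)
  refine hγle.trans (max_le ?_ ?_)
  · simpa [hdiag] using (le_abs_self _).trans (hdist b)
  · simpa [hdiag] using (neg_le_abs _).trans (hdist a)

theorem stmt12 (M : Matrix (Fin 3) (Fin 3) ℝ)
    (hnn : ∀ a b, 0 ≤ M a b) (hrow : ∀ a, ∑ b, M a b = 1) (hdiag : ∀ a, M a a = 0)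
    (π : Fin 3 → ℝ) (hπpos : ∀ a, 0 < π a) (hπsum : (∑ a, π a) = 1)
    (hrev : ∀ a b, π a * M a b = π b * M b a)
    (γ : ℝ) (hγ : 0 < γ) (hmax : ∀ a, π a ≤ 1 / 2 - γ) :
    ∀ a b : Fin 3, a ≠ b → γ ≤ Real.sqrt (∑ j, (M a j - M b j) ^ 2) :=
  stmt12_general M hnn hrow hdiag π hπpos hπsum hrev γ hmax
end

section
/- Let Ā_H = A_H/c and Ā_G = A_G/c be adjacency matrices of graphs H and G normalized by the same c > 0, where G is obtained from H by deleting all monochromatic edges of a k-partition of the vertices. If Ā_H has at most t₁ eigenvalues ≥ r₁ and at most t₂ eigenvalues ≤ −r₂, then Ā_G has at most k·t₁ + t₂ eigenvalues ≤ −(r₁ + r₂) and at most t₁ + k·t₂ eigenvalues ≥ r₁ + r₂. -/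
/-!
At most `t` eigenvalues of a symmetric matrix `M` are `≥ r` as soon as `x ⬝ᵥ M x < r ‖x‖²` on a
subspace of codimension `t`, and the span of the eigenvectors with eigenvalue `< r` is such a
subspace. Such bounds combine: if `Ā_H < r₁` on `ker T`, then `Ā_F = ∑ₚ Pₚ Ā_H Pₚ`, with `Pₚ` the
coordinate projection onto the part `p`, is `< r₁` on `⋂ₚ Pₚ⁻¹ (ker T)`, of codimension at most
`k t₁` (Cauchy interlacing); and bounds for two matrices on `ker T` and `ker T'` add up on
`ker T ∩ ker T'` (Weyl). Both counts follow, from `-Ā_G = -Ā_H + Ā_F` and `Ā_G = Ā_H + (-Ā_F)`.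
-/

open Matrix Finset Module

namespace Matrix

variable {m : Type*}

section BlockDiagonalPart

variable {κ α : Type*} [DecidableEq κ]

def blockDiagonalPart [Zero α] (χ : m → κ) (A : Matrix m m α) : Matrix m m α :=
  of fun i j => if χ i = χ j then A i j else 0

theorem blockDiagonalPart_smul [Zero α] {S : Type*} [SMulZeroClass S α] (χ : m → κ) (c : S)
    (A : Matrix m m α) : blockDiagonalPart χ (c • A) = c • blockDiagonalPart χ A := by
  ext i j
  by_cases h : χ i = χ j <;> simp [blockDiagonalPart, h]

theorem blockDiagonalPart_neg [NegZeroClass α] (χ : m → κ) (A : Matrix m m α) :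
    blockDiagonalPart χ (-A) = -blockDiagonalPart χ A := by
  ext i j
  by_cases h : χ i = χ j <;> simp [blockDiagonalPart, h]

def blockProj [DecidableEq m] [Zero α] [One α] (χ : m → κ) (p : κ) : Matrix m m α :=
  diagonal fun i => if χ i = p then 1 else 0

variable [Fintype m] [DecidableEq m] [Fintype κ] [Semiring α]

theorem sum_transpose_blockProj_mul_blockProj (χ : m → κ) :
    ∑ p, (blockProj χ p : Matrix m m α)ᵀ * blockProj χ p = 1 := by
  ext i j
  simp [blockProj, sum_apply, diagonal_apply, one_apply]

theorem blockDiagonalPart_eq_sum (χ : m → κ) (A : Matrix m m α) :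
    blockDiagonalPart χ A = ∑ p, (blockProj χ p)ᵀ * A * blockProj χ p := by
  ext i j
  simp [blockDiagonalPart, blockProj, sum_apply, diagonal_mul, mul_diagonal]

end BlockDiagonalPart

variable [Fintype m]

def QuadLtOnKer {W : Type*} [AddCommGroup W] [Module ℝ W] (M : Matrix m m ℝ) (r : ℝ)
    (T : (m → ℝ) →ₗ[ℝ] W) : Prop :=
  ∀ x ∈ LinearMap.ker T, x ≠ 0 → x ⬝ᵥ (M *ᵥ x) < r * (x ⬝ᵥ x)

section QuadLtOnKer

variable {W W' : Type*} [AddCommGroup W] [Module ℝ W] [AddCommGroup W'] [Module ℝ W']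
  {M N : Matrix m m ℝ} {r s : ℝ} {T : (m → ℝ) →ₗ[ℝ] W} {T' : (m → ℝ) →ₗ[ℝ] W'}

theorem QuadLtOnKer.add (h : QuadLtOnKer M r T) (h' : QuadLtOnKer N s T') :
    QuadLtOnKer (M + N) (r + s) (T.prod T') := by
  intro x hx hx0
  rw [LinearMap.ker_prod] at hx
  have hM := h x hx.1 hx0
  have hN := h' x hx.2 hx0
  rw [add_mulVec, dotProduct_add, add_mul]
  linarith

theorem QuadLtOnKer.sum_transpose_mul_mul [DecidableEq m] {κ : Type*} [Fintype κ]
    {P : κ → Matrix m m ℝ} (hP : ∑ p, (P p)ᵀ * P p = 1) (h : QuadLtOnKer M r T) :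
    QuadLtOnKer (∑ p, (P p)ᵀ * M * P p) r (LinearMap.pi fun p => T ∘ₗ (P p).mulVecLin) := by
  intro x hx hx0
  have hxp : ∀ p, P p *ᵥ x ∈ LinearMap.ker T := by
    simpa [LinearMap.ker_pi] using hx
  have hconj : ∀ N : Matrix m m ℝ,
      x ⬝ᵥ ((∑ p, (P p)ᵀ * N * P p) *ᵥ x) = ∑ p, (P p *ᵥ x) ⬝ᵥ (N *ᵥ (P p *ᵥ x)) := by
    intro N
    simp only [sum_mulVec, dotProduct_sum, ← mulVec_mulVec, dotProduct_mulVec, vecMul_transpose]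
  have hnorm : x ⬝ᵥ x = ∑ p, (P p *ᵥ x) ⬝ᵥ (P p *ᵥ x) := by
    simpa [← Matrix.mul_assoc, hP] using hconj 1
  obtain ⟨p, hp⟩ : ∃ p, P p *ᵥ x ≠ 0 := by
    by_contra! h0
    exact hx0 (dotProduct_self_eq_zero.mp (by simp [hnorm, h0]))
  rw [hconj, hnorm, mul_sum]
  refine sum_lt_sum (fun q _ => ?_) ⟨p, mem_univ _, h _ (hxp p) hp⟩
  by_cases hq : P q *ᵥ x = 0
  · simp [hq]
  · exact (h _ (hxp q) hq).le

end QuadLtOnKer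

section Diagonalized

variable [DecidableEq m] {M : Matrix m m ℝ} {U : unitaryGroup m ℝ} {μ : m → ℝ}

theorem dotProduct_mulVec_eq_sum_of_eq_conj (hM : M = U * diagonal μ * star (U : Matrix m m ℝ))
    (x : m → ℝ) : x ⬝ᵥ (M *ᵥ x) = ∑ i, μ i * (star (U : Matrix m m ℝ) *ᵥ x) i ^ 2 := by
  rw [hM, ← mulVec_mulVec, ← mulVec_mulVec, dotProduct_mulVec, ← mulVec_transpose,
    ← conjTranspose_eq_transpose_of_trivial, ← star_eq_conjTranspose]
  simp only [dotProduct, mulVec_diagonal]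
  exact sum_congr rfl fun i _ => by ring

theorem dotProduct_self_eq_sum_sq (U : unitaryGroup m ℝ) (x : m → ℝ) :
    x ⬝ᵥ x = ∑ i, (star (U : Matrix m m ℝ) *ᵥ x) i ^ 2 := by
  simpa using dotProduct_mulVec_eq_sum_of_eq_conj (M := 1) (μ := 1) (U := U) (by simp) x

def spectralCoords (U : unitaryGroup m ℝ) (S : m → Prop) : (m → ℝ) →ₗ[ℝ] ({i // S i} → ℝ) :=
  LinearMap.funLeft ℝ ℝ Subtype.val ∘ₗ (star (U : Matrix m m ℝ)).mulVecLin

theorem mem_ker_spectralCoords {S : m → Prop} {x : m → ℝ} :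
    x ∈ LinearMap.ker (spectralCoords U S) ↔
      ∀ i, S i → (star (U : Matrix m m ℝ) *ᵥ x) i = 0 := by
  simp [spectralCoords, funext_iff]

theorem quadLtOnKer_spectralCoords (hM : M = U * diagonal μ * star (U : Matrix m m ℝ)) (r : ℝ) :
    QuadLtOnKer M r (spectralCoords U fun i => r ≤ μ i) := by
  intro x hx hx0
  rw [mem_ker_spectralCoords] at hx
  rw [dotProduct_mulVec_eq_sum_of_eq_conj hM, dotProduct_self_eq_sum_sq U, mul_sum]
  set y := star (U : Matrix m m ℝ) *ᵥ x
  have hlt : ∀ i, y i ≠ 0 → μ i < r := fun i hi => not_le.mp fun h => hi (hx i h)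
  obtain ⟨j, hj⟩ : ∃ j, y j ≠ 0 := by
    by_contra! h0
    exact hx0 (dotProduct_self_eq_zero.mp (by simp [dotProduct_self_eq_sum_sq U, y, h0]))
  refine sum_lt_sum (fun i _ => ?_)
    ⟨j, mem_univ _, mul_lt_mul_of_pos_right (hlt j hj) (by positivity)⟩
  by_cases hi : y i = 0
  · simp [hi]
  · exact mul_le_mul_of_nonneg_right (hlt i hi).le (sq_nonneg _)

theorem card_le_finrank_of_quadLtOnKer (hM : M = U * diagonal μ * star (U : Matrix m m ℝ))
    {W : Type*} [AddCommGroup W] [Module ℝ W] [FiniteDimensional ℝ W] {r : ℝ}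
    {T : (m → ℝ) →ₗ[ℝ] W} (h : QuadLtOnKer M r T) : #{i | r ≤ μ i} ≤ finrank ℝ W := by
  by_contra! hlt
  have hcard : #{i | r ≤ μ i} + #{i | ¬ r ≤ μ i} = Fintype.card m :=
    card_filter_add_card_filter_not _
  -- a nonzero `x ∈ ker T` whose coordinates vanish wherever `μ < r`
  obtain ⟨x, hx, hx0⟩ := Submodule.exists_mem_ne_zero_of_ne_bot <|
    LinearMap.ker_ne_bot_of_finrank_lt (f := T.prod (spectralCoords U fun i => ¬ r ≤ μ i))
      (by simp only [finrank_prod, finrank_fintype_fun_eq_card, Fintype.card_subtype]; omega)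
  rw [LinearMap.ker_prod, Submodule.mem_inf, mem_ker_spectralCoords] at hx
  refine (h x hx.1 hx0).not_ge ?_
  rw [dotProduct_mulVec_eq_sum_of_eq_conj hM, dotProduct_self_eq_sum_sq U, mul_sum]
  refine sum_le_sum fun i _ => ?_
  by_cases hi : r ≤ μ i
  · exact mul_le_mul_of_nonneg_right hi (sq_nonneg _)
  · simp [hx.2 i hi]

theorem IsHermitian.eq_conj_diagonal {A : Matrix m m ℝ} (hA : A.IsHermitian) :
    A = hA.eigenvectorUnitary * diagonal hA.eigenvalues *
      star (hA.eigenvectorUnitary : Matrix m m ℝ) :=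
  hA.spectral_theorem.trans (by simp [RCLike.ofReal_real_eq_id])

theorem IsHermitian.neg_eq_conj_diagonal {A : Matrix m m ℝ} (hA : A.IsHermitian) :
    -A = hA.eigenvectorUnitary * diagonal (-hA.eigenvalues) *
      star (hA.eigenvectorUnitary : Matrix m m ℝ) := by
  conv_lhs => rw [hA.eq_conj_diagonal]
  rw [show diagonal (-hA.eigenvalues) = -diagonal hA.eigenvalues from (diagonal_neg _).symm,
    Matrix.mul_neg, Matrix.neg_mul]

end Diagonalized

-- Phrased through diagonalizations rather than `IsHermitian.eigenvalues` so that it applies to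
-- `-A`, whose eigenvalues are those of `A` negated and listed in the opposite order.
theorem card_le_of_eq_add_blockDiagonalPart {m κ : Type*} [Fintype m] [DecidableEq m]
    [Fintype κ] [DecidableEq κ] {χ : m → κ} {B M₁ M₂ : Matrix m m ℝ} {U U₁ U₂ : unitaryGroup m ℝ}
    {ν μ₁ μ₂ : m → ℝ} (hB : B = U * diagonal ν * star (U : Matrix m m ℝ))
    (h₁ : M₁ = U₁ * diagonal μ₁ * star (U₁ : Matrix m m ℝ))
    (h₂ : M₂ = U₂ * diagonal μ₂ * star (U₂ : Matrix m m ℝ))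
    (hsum : B = M₁ + blockDiagonalPart χ M₂) (r₁ r₂ : ℝ) :
    #{i | r₁ + r₂ ≤ ν i} ≤ #{i | r₁ ≤ μ₁ i} + Fintype.card κ * #{i | r₂ ≤ μ₂ i} := by
  have hcert := (quadLtOnKer_spectralCoords h₁ r₁).add
    ((quadLtOnKer_spectralCoords h₂ r₂).sum_transpose_mul_mul
      (sum_transpose_blockProj_mul_blockProj χ))
  rw [← blockDiagonalPart_eq_sum, ← hsum] at hcert
  refine (card_le_finrank_of_quadLtOnKer hB hcert).trans_eq ?_
  simp [finrank_prod, finrank_pi_fintype, Fintype.card_subtype]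

end Matrix

theorem SimpleGraph.adjMatrix_eq_sub_blockDiagonalPart {V κ R : Type*} [DecidableEq κ]
    [AddGroupWithOne R] {G H : SimpleGraph V} [DecidableRel G.Adj] [DecidableRel H.Adj]
    {χ : V → κ} (hG : ∀ x y, G.Adj x y ↔ H.Adj x y ∧ χ x ≠ χ y) :
    G.adjMatrix R = H.adjMatrix R - blockDiagonalPart χ (H.adjMatrix R) := by
  ext i j
  by_cases h : χ i = χ j <;> simp [blockDiagonalPart, hG, h]

open scoped Classical

theorem stmt16_general {n k : ℕ} (c : ℝ)
    (H G : SimpleGraph (Fin n)) [DecidableRel H.Adj] [DecidableRel G.Adj]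
    (χ : Fin n → Fin k)
    (hG : ∀ x y, G.Adj x y ↔ H.Adj x y ∧ χ x ≠ χ y)
    (hH : (c⁻¹ • H.adjMatrix ℝ).IsHermitian)
    (hGh : (c⁻¹ • G.adjMatrix ℝ).IsHermitian)
    (r1 r2 : ℝ) (t1 t2 : ℕ)
    (htop : (Finset.univ.filter fun i => r1 ≤ hH.eigenvalues i).card ≤ t1)
    (hbot : (Finset.univ.filter fun i => hH.eigenvalues i ≤ -r2).card ≤ t2) :
    (Finset.univ.filter fun i => hGh.eigenvalues i ≤ -(r1 + r2)).card ≤ k * t1 + t2 ∧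
    (Finset.univ.filter fun i => r1 + r2 ≤ hGh.eigenvalues i).card ≤ t1 + k * t2 := by
  have hGH : c⁻¹ • G.adjMatrix ℝ =
      c⁻¹ • H.adjMatrix ℝ - blockDiagonalPart χ (c⁻¹ • H.adjMatrix ℝ) := by
    rw [G.adjMatrix_eq_sub_blockDiagonalPart hG, smul_sub, blockDiagonalPart_smul]
  have hbot' : #{i | r2 ≤ (-hH.eigenvalues) i} ≤ t2 := by
    simpa only [Pi.neg_apply, le_neg] using hbot
  constructor
  · have h := card_le_of_eq_add_blockDiagonalPart (χ := χ) hGh.neg_eq_conj_diagonal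
      hH.neg_eq_conj_diagonal hH.eq_conj_diagonal (by rw [hGH]; abel) r2 r1
    simp only [Pi.neg_apply, le_neg, Fintype.card_fin, add_comm r2 r1] at h
    linarith [Nat.mul_le_mul_left k htop]
  · have h := card_le_of_eq_add_blockDiagonalPart (χ := χ) hGh.eq_conj_diagonal
      hH.eq_conj_diagonal hH.neg_eq_conj_diagonal
      (by rw [hGH, blockDiagonalPart_neg, sub_eq_add_neg]) r1 r2
    simp only [Fintype.card_fin] at h
    linarith [Nat.mul_le_mul_left k hbot']

theorem stmt16 {n k : ℕ} (c : ℝ) (hc : 0 < c)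
    (H G : SimpleGraph (Fin n)) [DecidableRel H.Adj] [DecidableRel G.Adj]
    (χ : Fin n → Fin k)
    (hG : ∀ x y, G.Adj x y ↔ H.Adj x y ∧ χ x ≠ χ y)
    (hH : (c⁻¹ • H.adjMatrix ℝ).IsHermitian)
    (hGh : (c⁻¹ • G.adjMatrix ℝ).IsHermitian)
    (r1 r2 : ℝ) (hr1 : 0 ≤ r1) (hr2 : 0 ≤ r2) (t1 t2 : ℕ)
    (htop : (Finset.univ.filter fun i => r1 ≤ hH.eigenvalues i).card ≤ t1)
    (hbot : (Finset.univ.filter fun i => hH.eigenvalues i ≤ -r2).card ≤ t2) :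
    (Finset.univ.filter fun i => hGh.eigenvalues i ≤ -(r1 + r2)).card ≤ k * t1 + t2 ∧
    (Finset.univ.filter fun i => r1 + r2 ≤ hGh.eigenvalues i).card ≤ t1 + k * t2 :=
  stmt16_general c H G χ hG hH hGh r1 r2 t1 t2 htop hbot
end
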